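/- arXiv:math/0603165 — 12 statements merged into one kernel-verified Lean document; each statement's English description precedes it below -/
import Mathlib

section
/- Let I be an ideal of the ring Λ = ℤ[t,t⁻¹]. The quotient Λ-module M = Λ/I is (t−1)-invertible if and only if I contains a polynomial f(t) ∈ ℤ[t] such that f(1) = 1. -/
open Polynomial

/-- `Λ` is the ring `ℤ[t,t⁻¹]` of Laurent polynomials with integer coefficients. -/
abbrev Λ : Type := LaurentPolynomial ℤ

/-- `tL` is the element `t` of `Λ = ℤ[t,t⁻¹]`. -/
noncomputable def tL : Λ := LaurentPolynomial.T 1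

/-- The quotient `Λ/I` is `(t−1)`-invertible iff `I` contains a polynomial `f` with `f(1) = 1`. -/
theorem quotient_t_sub_one_invertible_iff (I : Ideal Λ) :
    Function.Bijective (fun v : Λ ⧸ I => (tL - 1) • v) ↔
      ∃ f : Polynomial ℤ, Polynomial.toLaurent f ∈ I ∧ f.eval 1 = 1 := by
  have hsmul : ∀ (r : Λ) (v : Λ ⧸ I), r • v = Ideal.Quotient.mk I r * v := by
    intro r v
    obtain ⟨w, rfl⟩ := Ideal.Quotient.mk_surjective v
    rw [← map_mul]
    rfl
  constructor
  · intro h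
    obtain ⟨v, hv⟩ := h.2 1
    obtain ⟨w, rfl⟩ := Ideal.Quotient.mk_surjective v
    simp only [hsmul, ← map_mul] at hv
    have hmem : (tL - 1) * w - 1 ∈ I := by
      rw [← Ideal.Quotient.eq_zero_iff_mem, map_sub, hv, map_one, sub_self]
    obtain ⟨n, p, hp⟩ := LaurentPolynomial.exists_T_pow w
    refine ⟨X ^ n - (X - 1) * p, ?_, by simp⟩
    have hcalc : Polynomial.toLaurent (X ^ n - (X - 1) * p : Polynomial ℤ)
        = -(LaurentPolynomial.T (n : ℤ) * ((tL - 1) * w - 1)) := by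
      rw [map_sub, map_mul, map_sub, Polynomial.toLaurent_X,
        Polynomial.toLaurent_X_pow, map_one, hp]
      show LaurentPolynomial.T (n : ℤ) - (tL - 1) * (w * LaurentPolynomial.T (n : ℤ)) = _
      ring
    rw [hcalc]
    exact I.neg_mem (I.mul_mem_left _ hmem)
  · rintro ⟨f, hfI, hf1⟩
    have hdvd : (X - 1 : Polynomial ℤ) ∣ f - 1 := by
      have h1 : (X - 1 : Polynomial ℤ) = X - C 1 := by simp
      rw [h1, dvd_iff_isRoot]
      simp [IsRoot, hf1]
    obtain ⟨g, hg⟩ := hdvd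
    set u : Λ ⧸ I := Ideal.Quotient.mk I (Polynomial.toLaurent g) with hu
    have h0 : Ideal.Quotient.mk I (Polynomial.toLaurent f) = 0 :=
      Ideal.Quotient.eq_zero_iff_mem.2 hfI
    have key : Ideal.Quotient.mk I (tL - 1) * u = -1 := by
      have := congrArg (fun q => Ideal.Quotient.mk I (Polynomial.toLaurent q)) hg
      simp only [map_sub, map_mul, map_one, Polynomial.toLaurent_X, h0,
        zero_sub] at this
      rw [hu, map_sub, map_one]
      unfold tL
      exact this.symm
    rw [Function.bijective_iff_has_inverse]
    have hmain : ∀ v : Λ ⧸ I, Ideal.Quotient.mk I (tL - 1) * (-u * v) = v := by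
      intro v
      calc Ideal.Quotient.mk I (tL - 1) * (-u * v)
          = -(Ideal.Quotient.mk I (tL - 1) * u) * v := by ring
        _ = v := by rw [key]; ring
    refine ⟨fun v => -u * v, fun v => ?_, fun v => ?_⟩
    · simp only [hsmul]
      rw [mul_left_comm]
      exact hmain v
    · simp only [hsmul, hmain]
end

section
/- A Noetherian Λ-module M is (t−1)-invertible if and only if the annihilator Ann(M) contains a polynomial f(t) ∈ ℤ[t] with f(1) = 1. -/
/-!
By Nakayama's lemma, `(t - 1) M = M` for a finitely generated `M` gives some `s ∈ Λ` with
`1 + (t - 1) s` annihilating `M`; conversely such an `s` makes `-s` an inverse of `t - 1`.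
Clearing denominators, `(1 + (t - 1) s) tᵐ` is a polynomial with value `1` at `t = 1`, and
every polynomial with `f(1) = 1` has the form `1 + (t - 1) g`.
-/

open Polynomial

section SmulBijective

variable {R M : Type*} [CommRing R] [AddCommGroup M] [Module R M]

theorem exists_one_add_mul_smul_eq_zero_of_surjective_smul [Module.Finite R M] {a : R}
    (h : Function.Surjective (fun v : M => a • v)) :
    ∃ s : R, ∀ v : M, (1 + a * s) • v = 0 := by
  have hle : (⊤ : Submodule R M) ≤ Ideal.span {a} • ⊤ := by
    rintro v -
    obtain ⟨w, rfl⟩ := h v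
    rw [Submodule.ideal_span_singleton_smul]
    exact Submodule.smul_mem_pointwise_smul w a ⊤ trivial
  obtain ⟨r, hr, hr0⟩ := Submodule.exists_sub_one_mem_and_smul_eq_zero_of_fg_of_le_smul _ ⊤
    Module.Finite.fg_top hle
  obtain ⟨s, hs⟩ := Ideal.mem_span_singleton'.mp hr
  exact ⟨s, fun v => by rw [mul_comm, hs, add_sub_cancel, hr0 v trivial]⟩

theorem bijective_smul_of_one_add_mul_smul_eq_zero {a s : R}
    (h : ∀ v : M, (1 + a * s) • v = 0) : Function.Bijective (fun v : M => a • v) := by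
  have hinv : ∀ v : M, a • (-s) • v = v := fun v => by
    rw [smul_smul, mul_neg, neg_smul, neg_eq_iff_add_eq_zero, ← h v, add_smul, one_smul, add_comm]
  refine ⟨fun v w hvw => ?_, fun v => ⟨(-s) • v, hinv v⟩⟩
  rw [← hinv v, ← hinv w, smul_comm a, smul_comm a, show a • v = a • w from hvw]

theorem bijective_smul_iff_exists_one_add_mul_smul_eq_zero [Module.Finite R M] (a : R) :
    Function.Bijective (fun v : M => a • v) ↔ ∃ s : R, ∀ v : M, (1 + a * s) • v = 0 :=
  ⟨fun h => exists_one_add_mul_smul_eq_zero_of_surjective_smul h.2,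
    fun ⟨_, h⟩ => bijective_smul_of_one_add_mul_smul_eq_zero h⟩

end SmulBijective

theorem toLaurent_X_sub_one : toLaurent (X - 1 : ℤ[X]) = tL - 1 := by
  simp [tL]

theorem exists_eq_one_add_X_sub_one_mul {f : ℤ[X]} (hf : f.eval 1 = 1) :
    ∃ g : ℤ[X], f = 1 + (X - 1) * g := by
  obtain ⟨g, hg⟩ := X_sub_C_dvd_sub_C_eval (a := (1 : ℤ)) (p := f)
  exact ⟨g, by rw [← C_1, ← hg, hf, C_1]; ring⟩

theorem exists_toLaurent_eq_one_add_mul_T (s : Λ) :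
    ∃ (f : ℤ[X]) (m : ℕ), f.eval 1 = 1 ∧
      toLaurent f = (1 + (tL - 1) * s) * LaurentPolynomial.T m := by
  obtain ⟨m, g, hg⟩ := s.exists_T_pow
  refine ⟨X ^ m + (X - 1) * g, m, by simp, ?_⟩
  rw [map_add, map_mul, hg, toLaurent_X_sub_one, toLaurent_X_pow]
  ring

/-- A Noetherian Λ-module is (t−1)-invertible iff its annihilator contains a polynomial
`f` with `f(1) = 1`. -/
theorem t_sub_one_invertible_iff_ann_poly (M : Type) [AddCommGroup M] [Module Λ M]
    [IsNoetherian Λ M] :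
    Function.Bijective (fun v : M => (tL - 1) • v) ↔
      ∃ f : Polynomial ℤ, f.eval 1 = 1 ∧ ∀ v : M, (Polynomial.toLaurent f) • v = 0 := by
  rw [bijective_smul_iff_exists_one_add_mul_smul_eq_zero]
  constructor
  · rintro ⟨s, hs⟩
    obtain ⟨f, m, hf1, hf⟩ := exists_toLaurent_eq_one_add_mul_T s
    exact ⟨f, hf1, fun v => by rw [hf, mul_comm, mul_smul, hs, smul_zero]⟩
  · rintro ⟨f, hf1, hf⟩
    obtain ⟨g, rfl⟩ := exists_eq_one_add_X_sub_one_mul hf1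
    refine ⟨toLaurent g, fun v => ?_⟩
    simpa only [map_add, toLaurent_one, map_mul, toLaurent_X_sub_one] using hf v
end

section
/- Every Noetherian (t−1)-invertible Λ-module M is a torsion Λ-module (there is a nonzero element of Λ annihilating all of M), and consequently M ⊗_ℤ ℚ is a finite-dimensional ℚ-vector space. -/
open Polynomial

namespace AuxNIT
open TensorProduct

noncomputable def eps : Λ →+* ℤ :=
  AddMonoidAlgebra.liftNCRingHom (RingHom.id ℤ) (1 : Multiplicative ℤ →* ℤ)
    (fun _ _ => Commute.all _ _)

lemma eps_T (n : ℤ) : eps (LaurentPolynomial.T n) = 1 := by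
  show AddMonoidAlgebra.liftNC _ _ (AddMonoidAlgebra.single n 1) = 1
  rw [AddMonoidAlgebra.liftNC_single]; simp

variable (M : Type) [AddCommGroup M] [Module Λ M]

noncomputable def tau : M →ₗ[ℤ] M := (LinearMap.lsmul Λ M tL).restrictScalars ℤ
noncomputable def tau' : M →ₗ[ℤ] M :=
  (LinearMap.lsmul Λ M (LaurentPolynomial.T (-1))).restrictScalars ℤ

variable {M}

lemma tau_apply (m : M) : tau M m = tL • m := rfl
lemma tau'_apply (m : M) : tau' M m = (LaurentPolynomial.T (-1) : Λ) • m := rfl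

lemma tau'_tau : (tau' M).comp (tau M) = LinearMap.id := by
  ext m
  simp only [LinearMap.comp_apply, tau_apply, tau'_apply, LinearMap.id_apply, tL,
    ← mul_smul, ← LaurentPolynomial.T_add]
  norm_num [LaurentPolynomial.T_zero]

lemma tau_pow (i : ℕ) (m : M) : ((tau M) ^ i) m = (tL ^ i) • m := by
  induction i generalizing m with
  | zero => simp
  | succ n ih =>
    rw [pow_succ, Module.End.mul_apply, tau_apply, ih, ← mul_smul, ← pow_succ]
    
noncomputable def TT : ℚ ⊗[ℤ] M →ₗ[ℚ] ℚ ⊗[ℤ] M := LinearMap.baseChange ℚ (tau M)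
noncomputable def TT' : ℚ ⊗[ℤ] M →ₗ[ℚ] ℚ ⊗[ℤ] M := LinearMap.baseChange ℚ (tau' M)

lemma TT'_TT (x : ℚ ⊗[ℤ] M) : TT' (TT x) = x := by
  have : (TT' (M := M)).comp TT = LinearMap.id := by
    rw [TT, TT', ← LinearMap.baseChange_comp, tau'_tau, LinearMap.baseChange_id]
  simpa using LinearMap.congr_fun this x


lemma tL_pow (i : ℕ) : (tL : Λ) ^ i = LaurentPolynomial.T (i : ℤ) := by
  rw [tL, LaurentPolynomial.T_pow, mul_one]

lemma C_smul (a : ℤ) (m : M) : (LaurentPolynomial.C a : Λ) • m = a • m := by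
  rw [eq_intCast (LaurentPolynomial.C (R := ℤ)) a, Int.cast_smul_eq_zsmul]

lemma toLaurent_smul_eq (g : ℤ[X]) (m : M) :
    (toLaurent g : Λ) • m = ∑ i ∈ g.support, g.coeff i • ((tL ^ i) • m) := by
  conv_lhs => rw [g.as_sum_support]
  rw [map_sum, Finset.sum_smul]
  refine Finset.sum_congr rfl fun i _ => ?_
  rw [← C_mul_X_pow_eq_monomial, Polynomial.toLaurent_C_mul_X_pow, mul_smul, C_smul, tL_pow]

lemma TT_pow_tmul (i : ℕ) (q : ℚ) (m : M) :
    ((TT : ℚ ⊗[ℤ] M →ₗ[ℚ] ℚ ⊗[ℤ] M) ^ i) (q ⊗ₜ[ℤ] m) = q ⊗ₜ[ℤ] ((tL ^ i) • m) := by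
  induction i generalizing m with
  | zero => simp
  | succ n ih =>
    rw [pow_succ, Module.End.mul_apply, show (TT (q ⊗ₜ[ℤ] m)) = q ⊗ₜ[ℤ] (tL • m) from
      LinearMap.baseChange_tmul _ _ _, ih, ← mul_smul, ← pow_succ]

lemma rel (g : ℤ[X]) (hann : ∀ v : M, (toLaurent g : Λ) • v = 0) (x : ℚ ⊗[ℤ] M) :
    ∑ i ∈ g.support, (g.coeff i : ℚ) • ((TT ^ i) x) = 0 := by
  induction x using TensorProduct.induction_on with
  | zero => simp
  | add a b ha hb => simp only [map_add, smul_add, Finset.sum_add_distrib, ha, hb, add_zero]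
  | tmul q m =>
    have : ∀ i ∈ g.support, (g.coeff i : ℚ) • ((TT ^ i) (q ⊗ₜ[ℤ] m))
        = q ⊗ₜ[ℤ] (g.coeff i • ((tL ^ i) • m)) := by
      intro i _
      rw [TT_pow_tmul, TensorProduct.smul_tmul', Int.cast_smul_eq_zsmul,
        TensorProduct.smul_tmul]
    rw [Finset.sum_congr rfl this, ← TensorProduct.tmul_sum, ← toLaurent_smul_eq, hann,
      TensorProduct.tmul_zero]


lemma TT'_TT_pow (j : ℕ) (x : ℚ ⊗[ℤ] M) : TT' ((TT ^ (j + 1)) x) = (TT ^ j) x := by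
  rw [pow_succ', Module.End.mul_apply, TT'_TT]

lemma finite_of_ann (S : Finset M) (hS : Submodule.span Λ (S : Set M) = ⊤)
    (g : ℤ[X]) (hg : g ≠ 0) (hann : ∀ v : M, (toLaurent g : Λ) • v = 0) :
    Module.Finite ℚ (ℚ ⊗[ℤ] M) := by
  set k := g.natTrailingDegree with hk
  set d := g.natDegree with hd
  set gens : Set (ℚ ⊗[ℤ] M) :=
    (fun p : ℕ × M => ((TT ^ p.1) ((1 : ℚ) ⊗ₜ[ℤ] p.2))) ''
      (((Finset.Ico k d : Finset ℕ) : Set ℕ) ×ˢ (S : Set M)) with hgens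
  set W : Submodule ℚ (ℚ ⊗[ℤ] M) := Submodule.span ℚ gens with hW
  have hfin : gens.Finite :=
    (Set.Finite.prod (Finset.Ico k d).finite_toSet S.finite_toSet).image _
  have hgen : ∀ i, k ≤ i → i < d → ∀ s ∈ S, (TT ^ i) ((1:ℚ) ⊗ₜ[ℤ] s) ∈ W := by
    intro i h1 h2 s hs
    exact Submodule.subset_span ⟨(i, s), ⟨by simpa using ⟨h1, h2⟩, hs⟩, rfl⟩
  have hsupp : ∀ j ∈ g.support, k ≤ j ∧ j ≤ d := fun j hj =>
    ⟨Polynomial.natTrailingDegree_le_of_mem_supp j hj, Polynomial.le_natDegree_of_mem_supp j hj⟩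
  have hcd : ((g.coeff d : ℤ) : ℚ) ≠ 0 :=
    Int.cast_ne_zero.mpr (Polynomial.mem_support_iff.mp (g.natDegree_mem_support_of_nonzero hg))
  have hck : ((g.coeff k : ℤ) : ℚ) ≠ 0 :=
    Int.cast_ne_zero.mpr
      (Polynomial.mem_support_iff.mp (Polynomial.natTrailingDegree_mem_support_of_nonzero hg))
  -- top step
  have stepA : ∀ s ∈ S, (TT ^ d) ((1:ℚ) ⊗ₜ[ℤ] s) ∈ W := by
    intro s hs
    have h0 := rel g hann ((1:ℚ) ⊗ₜ[ℤ] s)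
    rw [← Finset.add_sum_erase _ _ (g.natDegree_mem_support_of_nonzero hg)] at h0
    have h1 : (g.coeff d : ℚ) • (TT ^ d) ((1:ℚ) ⊗ₜ[ℤ] s)
        = -∑ i ∈ g.support.erase d, (g.coeff i : ℚ) • (TT ^ i) ((1:ℚ) ⊗ₜ[ℤ] s) :=
      eq_neg_of_add_eq_zero_left h0
    have h2 : (g.coeff d : ℚ) • (TT ^ d) ((1:ℚ) ⊗ₜ[ℤ] s) ∈ W := by
      rw [h1]
      refine W.neg_mem (Submodule.sum_mem _ fun i hi => W.smul_mem _ ?_)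
      have hid := Finset.ne_of_mem_erase hi
      obtain ⟨hk1, hd1⟩ := hsupp i (Finset.mem_of_mem_erase hi)
      exact hgen i hk1 (lt_of_le_of_ne hd1 hid) s hs
    have := W.smul_mem ((g.coeff d : ℚ)⁻¹) h2
    rwa [inv_smul_smul₀ hcd] at this
  -- T-stability
  have stabT : ∀ x ∈ W, TT x ∈ W := by
    intro x hx
    induction hx using Submodule.span_induction with
    | mem x hxg =>
      obtain ⟨⟨i, s⟩, hmem, rfl⟩ := hxg
      simp only [Finset.coe_Ico, Set.mem_prod, Set.mem_Ico, Finset.mem_coe] at hmem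
      obtain ⟨⟨hk1, hd1⟩, hs⟩ := hmem
      have : TT ((TT ^ i) ((1:ℚ) ⊗ₜ[ℤ] s)) = (TT ^ (i + 1)) ((1:ℚ) ⊗ₜ[ℤ] s) := by
        rw [pow_succ', Module.End.mul_apply]
      rw [this]
      rcases lt_or_eq_of_le (Nat.succ_le_of_lt hd1) with h | h
      · exact hgen (i+1) (le_trans hk1 (Nat.le_succ i)) h s hs
      · rw [show i + 1 = d from h]; exact stepA s hs
    | zero => rw [map_zero]; exact W.zero_mem
    | add a b _ _ ha hb => rw [map_add]; exact W.add_mem ha hb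
    | smul c x _ hx => rw [map_smul]; exact W.smul_mem c hx
  -- bottom step
  have stepB : ∀ s ∈ S, TT' ((TT ^ k) ((1:ℚ) ⊗ₜ[ℤ] s)) ∈ W := by
    intro s hs
    have h0 := rel g hann ((1:ℚ) ⊗ₜ[ℤ] s)
    rw [← Finset.add_sum_erase _ _ (Polynomial.natTrailingDegree_mem_support_of_nonzero hg)] at h0
    have h1 : (g.coeff k : ℚ) • (TT ^ k) ((1:ℚ) ⊗ₜ[ℤ] s)
        = -∑ i ∈ g.support.erase k, (g.coeff i : ℚ) • (TT ^ i) ((1:ℚ) ⊗ₜ[ℤ] s) :=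
      eq_neg_of_add_eq_zero_left h0
    have h2 : (g.coeff k : ℚ) • TT' ((TT ^ k) ((1:ℚ) ⊗ₜ[ℤ] s)) ∈ W := by
      rw [← map_smul, h1, map_neg, map_sum]
      refine W.neg_mem (Submodule.sum_mem _ fun i hi => ?_)
      have hik := Finset.ne_of_mem_erase hi
      obtain ⟨hk1, hd1⟩ := hsupp i (Finset.mem_of_mem_erase hi)
      have hik1 : k + 1 ≤ i := lt_of_le_of_ne hk1 (Ne.symm hik)
      have hi1 : i - 1 + 1 = i := by omega
      rw [map_smul, ← hi1, TT'_TT_pow]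
      refine W.smul_mem _ (hgen (i - 1) (by omega) (by omega) s hs)
    have := W.smul_mem ((g.coeff k : ℚ)⁻¹) h2
    rwa [inv_smul_smul₀ hck] at this
  -- T'-stability
  have stabT' : ∀ x ∈ W, TT' x ∈ W := by
    intro x hx
    induction hx using Submodule.span_induction with
    | mem x hxg =>
      obtain ⟨⟨i, s⟩, hmem, rfl⟩ := hxg
      simp only [Finset.coe_Ico, Set.mem_prod, Set.mem_Ico, Finset.mem_coe] at hmem
      obtain ⟨⟨hk1, hd1⟩, hs⟩ := hmem
      rcases eq_or_lt_of_le hk1 with h | h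
      · rw [← h]; exact stepB s hs
      · have hi1 : i - 1 + 1 = i := by omega
        rw [← hi1, TT'_TT_pow]
        exact hgen (i - 1) (by omega) (by omega) s hs
    | zero => rw [map_zero]; exact W.zero_mem
    | add a b _ _ ha hb => rw [map_add]; exact W.add_mem ha hb
    | smul c x _ hx => rw [map_smul]; exact W.smul_mem c hx
  -- iterated stabilities
  have stabT'pow : ∀ (n : ℕ) (x : ℚ ⊗[ℤ] M), x ∈ W → (TT' ^ n) x ∈ W := by
    intro n
    induction n with
    | zero => intro x hx; simpa using hx
    | succ m ih =>
      intro x hx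
      rw [pow_succ, Module.End.mul_apply]
      exact ih _ (stabT' x hx)
  have hTT'TTpow : ∀ (n : ℕ) (x : ℚ ⊗[ℤ] M), (TT' ^ n) ((TT ^ n) x) = x := by
    intro n
    induction n with
    | zero => intro x; simp
    | succ m ih =>
      intro x
      rw [pow_succ (TT' (M := M)), pow_succ' (TT (M := M)), Module.End.mul_apply,
        Module.End.mul_apply, TT'_TT]
      exact ih x
  -- base tensors of S lie in W
  have hxS : ∀ s ∈ S, (1:ℚ) ⊗ₜ[ℤ] s ∈ W := by
    intro s hs
    have hTk : (TT ^ k) ((1:ℚ) ⊗ₜ[ℤ] s) ∈ W := by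
      rcases lt_or_eq_of_le (g.natTrailingDegree_le_natDegree : k ≤ d) with h | h
      · exact hgen k le_rfl h s hs
      · rw [show k = d from h]; exact stepA s hs
    have := stabT'pow k _ hTk
    rwa [hTT'TTpow] at this
  -- the preimage submodule
  set N : Submodule ℤ M :=
    (W.restrictScalars ℤ).comap ((TensorProduct.mk ℤ ℚ M) 1) with hN
  have hNmem : ∀ m : M, m ∈ N ↔ (1:ℚ) ⊗ₜ[ℤ] m ∈ W := fun m => Iff.rfl
  have tstab : ∀ m ∈ N, tL • m ∈ N := by
    intro m hm
    have h' : TT ((1:ℚ) ⊗ₜ[ℤ] m) = (1:ℚ) ⊗ₜ[ℤ] (tL • m) := by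
      rw [TT, LinearMap.baseChange_tmul, tau_apply]
    rw [hNmem, ← h']
    exact stabT _ ((hNmem m).1 hm)
  have t'stab : ∀ m ∈ N, (LaurentPolynomial.T (-1) : Λ) • m ∈ N := by
    intro m hm
    have h' : TT' ((1:ℚ) ⊗ₜ[ℤ] m) = (1:ℚ) ⊗ₜ[ℤ] ((LaurentPolynomial.T (-1) : Λ) • m) := by
      rw [TT', LinearMap.baseChange_tmul, tau'_apply]
    rw [hNmem, ← h']
    exact stabT' _ ((hNmem m).1 hm)
  have tpowstab : ∀ (n : ℕ), ∀ m ∈ N, (tL ^ n : Λ) • m ∈ N := by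
    intro n
    induction n with
    | zero => intro m hm; simpa using hm
    | succ j ih =>
      intro m hm
      rw [pow_succ', mul_smul]
      exact tstab _ (ih m hm)
  have t'powstab : ∀ (n : ℕ), ∀ m ∈ N, ((LaurentPolynomial.T (-1) : Λ) ^ n) • m ∈ N := by
    intro n
    induction n with
    | zero => intro m hm; simpa using hm
    | succ j ih =>
      intro m hm
      rw [pow_succ', mul_smul]
      exact t'stab _ (ih m hm)
  have hsmul : ∀ (l : Λ), ∀ m ∈ N, l • m ∈ N := by
    have hpoly : ∀ (q : ℤ[X]), ∀ m ∈ N, (toLaurent q : Λ) • m ∈ N := by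
      intro q
      induction q using Polynomial.induction_on' with
      | add p r hp hr =>
        intro m hm
        rw [map_add, add_smul]
        exact N.add_mem (hp m hm) (hr m hm)
      | monomial i a =>
        intro m hm
        rw [← C_mul_X_pow_eq_monomial, Polynomial.toLaurent_C_mul_X_pow, mul_smul, C_smul,
          ← tL_pow]
        exact N.smul_mem a (tpowstab i m hm)
    intro l m hm
    obtain ⟨n, p, hp⟩ := l.exists_T_pow
    have hTn : (LaurentPolynomial.T (-(n:ℤ)) : Λ) = (LaurentPolynomial.T (-1) : Λ) ^ n := by
      rw [LaurentPolynomial.T_pow]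
      norm_num
    have key : l • m = (toLaurent p : Λ) • ((LaurentPolynomial.T (-(n:ℤ)) : Λ) • m) := by
      rw [← mul_smul, hp, mul_assoc, ← LaurentPolynomial.T_add]
      norm_num
    rw [key]
    refine hpoly p _ ?_
    rw [hTn]
    exact t'powstab n m hm
  have hNtop : ∀ m : M, m ∈ N := by
    intro m
    have hm : m ∈ Submodule.span Λ (S : Set M) := hS ▸ Submodule.mem_top
    induction hm using Submodule.span_induction with
    | mem x hx => exact (hNmem x).2 (hxS x hx)
    | zero => exact N.zero_mem
    | add a b _ _ ha hb => exact N.add_mem ha hb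
    | smul c x _ hx => exact hsmul c x hx
  have hWtop : W = ⊤ := by
    rw [eq_top_iff]
    rintro x -
    induction x using TensorProduct.induction_on with
    | zero => exact W.zero_mem
    | add a b ha hb => exact W.add_mem ha hb
    | tmul q m =>
      have : q ⊗ₜ[ℤ] m = q • ((1:ℚ) ⊗ₜ[ℤ] m) := by
        rw [TensorProduct.smul_tmul', smul_eq_mul, mul_one]
      rw [this]
      exact W.smul_mem q ((hNmem m).1 (hNtop m))
  refine ⟨?_⟩
  rw [← hWtop, hW]
  exact Submodule.fg_def.mpr ⟨gens, hfin, rfl⟩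


lemma part1 (M : Type) [AddCommGroup M] [Module Λ M] [IsNoetherian Λ M]
    (hM : Function.Bijective (fun v : M => (tL - 1) • v)) :
    ∃ f : Λ, f ≠ 0 ∧ ∀ v : M, f • v = 0 := by
  obtain ⟨r, hr1, hr0⟩ :=
    Submodule.exists_sub_one_mem_and_smul_eq_zero_of_fg_of_le_smul
      (Ideal.span {tL - 1}) (⊤ : Submodule Λ M) (IsNoetherian.noetherian ⊤)
      (by
        intro v _
        obtain ⟨w, hw⟩ := hM.2 v
        rw [← hw]
        exact Submodule.smul_mem_smul (Ideal.subset_span (Set.mem_singleton _))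
          Submodule.mem_top)
  refine ⟨r, ?_, fun v => hr0 v Submodule.mem_top⟩
  intro h
  rw [Ideal.mem_span_singleton'] at hr1
  obtain ⟨a, ha⟩ := hr1
  have := congrArg eps ha
  rw [map_mul, map_sub, map_sub, map_one,
    show eps tL = 1 from eps_T 1, sub_self, mul_zero, h, map_zero] at this
  omega

end AuxNIT

open TensorProduct in
/-- A Noetherian (t−1)-invertible Λ-module is a torsion Λ-module, and consequently
`M ⊗_ℤ ℚ` is a finite-dimensional ℚ-vector space. -/
theorem noetherian_invertible_torsion_and_finite_dim (M : Type) [AddCommGroup M] [Module Λ M]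
    [IsNoetherian Λ M]
    (hM : Function.Bijective (fun v : M => (tL - 1) • v)) :
    (∃ f : Λ, f ≠ 0 ∧ ∀ v : M, f • v = 0) ∧ Module.Finite ℚ (ℚ ⊗[ℤ] M) := by
  obtain ⟨f, hf0, hfann⟩ := AuxNIT.part1 M hM
  refine ⟨⟨f, hf0, hfann⟩, ?_⟩
  obtain ⟨S, hS⟩ : (⊤ : Submodule Λ M).FG := IsNoetherian.noetherian ⊤
  obtain ⟨n, g, hg⟩ := f.exists_T_pow
  have hgne : g ≠ 0 := by
    intro h
    apply hf0
    have : (Polynomial.toLaurent g : Λ) * LaurentPolynomial.T (-(n:ℤ)) = f := by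
      rw [hg, mul_assoc, ← LaurentPolynomial.T_add]
      norm_num
    rw [← this, h, map_zero, zero_mul]
  have hann : ∀ v : M, (Polynomial.toLaurent g : Λ) • v = 0 := by
    intro v
    rw [hg, mul_comm, mul_smul, hfann, smul_zero]
  exact AuxNIT.finite_of_ann S hS g hgne hann
end

section
/- Let M be a Noetherian (t−1)-invertible Λ-module and suppose t^n − 1 ∈ Ann(M) for some n = p^r, where p is a prime number and r ≥ 1. Then M is ℤ-torsion, i.e., every element of M has finite additive order. -/
open Polynomial

/-!
Since `t ^ N` (`N = p ^ r`) acts trivially, `Λ` acts on `M` through a quotient of `Λ` that is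
integral, hence finite, over `ℤ`; so `M` is a finitely generated abelian group. Modulo `p`,
`(t - 1) ^ N ≡ t ^ N - 1`, which kills `M`; hence `(t - 1) ^ N M ⊆ p M`, and invertibility of
`t - 1` gives `p M = M`. Nakayama's lemma then produces a nonzero integer annihilating `M`.
-/

namespace LaurentPolynomial

variable {R : Type*} [CommRing R]

theorem finite_of_surjective_of_T_pow_eq_one {A : Type*} [CommRing A] [Algebra R A]
    (φ : R[T;T⁻¹] →ₐ[R] A) (hφ : Function.Surjective φ) {N : ℕ} (hN : 0 < N)
    (hT : φ (T 1) ^ N = 1) : Module.Finite R A := by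
  have hpow : ∀ n : ℤ, φ (T n) ^ N = 1 := by
    intro n
    induction n using Int.induction_on with
    | zero => simp
    | succ k ih => rw [T_add, map_mul, mul_pow, ih, hT, one_mul]
    | pred k ih =>
      calc φ (T (-k - 1)) ^ N = φ (T (-k - 1)) ^ N * φ (T 1) ^ N := by rw [hT, mul_one]
        _ = 1 := by rw [← mul_pow, ← map_mul, ← T_add, sub_add_cancel, ih]
  have : Algebra.FiniteType R A := .of_surjective φ hφ
  have : Algebra.IsIntegral R A := by
    refine ⟨fun a ↦ ?_⟩
    obtain ⟨f, rfl⟩ := hφ a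
    induction f using LaurentPolynomial.induction_on' with
    | add f g hf hg => exact map_add φ f g ▸ hf.add hg
    | C_mul_T n a =>
      rw [map_mul, C_eq_algebraMap, AlgHom.commutes]
      exact isIntegral_algebraMap.mul (.of_pow hN (hpow n ▸ isIntegral_one))
  exact Algebra.IsIntegral.finite

theorem finite_of_forall_T_pow_smul_eq_self {M : Type*} [AddCommGroup M] [Module R M]
    [Module R[T;T⁻¹] M] [IsScalarTower R R[T;T⁻¹] M] [Module.Finite R[T;T⁻¹] M] {N : ℕ} (hN : 0 < N)
    (hT : ∀ v : M, (T 1 : R[T;T⁻¹]) ^ N • v = v) : Module.Finite R M := by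
  let := Module.quotientAnnihilator (R := R[T;T⁻¹]) (M := M)
  have : Module.Finite R (R[T;T⁻¹] ⧸ Module.annihilator R[T;T⁻¹] M) := by
    refine finite_of_surjective_of_T_pow_eq_one (Ideal.Quotient.mkₐ R _)
      (Ideal.Quotient.mkₐ_surjective R _) hN ?_
    rw [← map_pow, ← map_one (Ideal.Quotient.mkₐ R _), Ideal.Quotient.mkₐ_eq_mk, Ideal.Quotient.eq,
      Module.mem_annihilator]
    intro v
    rw [sub_smul, one_smul, hT, sub_self]
  have : Module.Finite (R[T;T⁻¹] ⧸ Module.annihilator R[T;T⁻¹] M) M :=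
    .of_restrictScalars_finite R[T;T⁻¹] _ M
  exact .trans (R[T;T⁻¹] ⧸ Module.annihilator R[T;T⁻¹] M) M

end LaurentPolynomial

theorem surjective_prime_smul_of_surjective_sub_one_smul {R M : Type*} [CommRing R]
    [AddCommGroup M] [Module R M] {x : R} (hx : Function.Surjective ((x - 1) • · : M → M))
    {p : ℕ} (hp : p.Prime) {r : ℕ} (hxr : ∀ v : M, x ^ p ^ r • v = v) :
    Function.Surjective (p • · : M → M) := by
  obtain ⟨c, hc⟩ := exists_add_pow_prime_pow_eq hp (x - 1) 1 r
  have hfrob : (x - 1) ^ p ^ r = (x ^ p ^ r - 1) - p * ((x - 1) * c) := by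
    rw [sub_add_cancel, one_pow] at hc
    linear_combination -hc
  intro v
  obtain ⟨w, rfl⟩ := (hx.iterate (p ^ r)) v
  refine ⟨-(((x - 1) * c) • w), ?_⟩
  simp only [smul_iterate]
  rw [hfrob, sub_smul, sub_smul, one_smul, hxr, sub_self, zero_sub, mul_smul (p : R),
    Nat.cast_smul_eq_nsmul, smul_neg]

theorem exists_ne_zero_smul_eq_zero_of_surjective_smul {R M : Type*} [CommRing R]
    [AddCommGroup M] [Module R M] [Module.Finite R M] {a : R} (ha : ¬IsUnit a)
    (h : Function.Surjective (a • · : M → M)) : ∃ c : R, c ≠ 0 ∧ ∀ v : M, c • v = 0 := by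
  have hle : (⊤ : Submodule R M) ≤ Ideal.span {a} • ⊤ := by
    intro v _
    obtain ⟨w, rfl⟩ := h v
    exact Submodule.smul_mem_smul (Ideal.mem_span_singleton_self a) Submodule.mem_top
  obtain ⟨c, hc1, hc⟩ := Submodule.exists_sub_one_mem_and_smul_eq_zero_of_fg_of_le_smul _ _
    Module.Finite.fg_top hle
  refine ⟨c, ?_, fun v ↦ hc v Submodule.mem_top⟩
  rintro rfl
  exact ha (isUnit_of_dvd_one (by simpa using Ideal.mem_span_singleton.mp hc1))

theorem zTorsion_of_prime_power_unipotent_general (M : Type) [AddCommGroup M] [Module Λ M]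
    [IsNoetherian Λ M]
    (hM : Function.Bijective (fun v : M => (tL - 1) • v))
    (p r : ℕ) (hp : p.Prime)
    (hann : ∀ v : M, (tL ^ (p ^ r) - 1) • v = 0) :
    ∀ v : M, ∃ n : ℕ, 0 < n ∧ n • v = 0 := by
  have htL : ∀ v : M, tL ^ p ^ r • v = v := fun v ↦ by
    simpa only [sub_smul, one_smul, sub_eq_zero] using hann v
  have : Module.Finite ℤ M :=
    LaurentPolynomial.finite_of_forall_T_pow_smul_eq_self (pow_pos hp.pos r) htL
  have hdiv : Function.Surjective ((p : ℤ) • · : M → M) := by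
    simpa only [natCast_zsmul] using surjective_prime_smul_of_surjective_sub_one_smul hM.2 hp htL
  obtain ⟨c, hc, hcM⟩ :=
    exists_ne_zero_smul_eq_zero_of_surjective_smul (Nat.prime_iff_prime_int.mp hp).not_isUnit hdiv
  exact fun v ↦ isOfFinAddOrder_iff_nsmul_eq_zero.mp
    (isOfFinAddOrder_iff_zsmul_eq_zero.mpr ⟨c, hc, hcM v⟩)

/-- If a Noetherian (t−1)-invertible Λ-module is annihilated by `t^(p^r) − 1` with `p` prime,
then it is ℤ-torsion. -/
theorem zTorsion_of_prime_power_unipotent (M : Type) [AddCommGroup M] [Module Λ M]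
    [IsNoetherian Λ M]
    (hM : Function.Bijective (fun v : M => (tL - 1) • v))
    (p r : ℕ) (hp : p.Prime) (hr : 1 ≤ r)
    (hann : ∀ v : M, (tL ^ (p ^ r) - 1) • v = 0) :
    ∀ v : M, ∃ n : ℕ, 0 < n ∧ n • v = 0 :=
  zTorsion_of_prime_power_unipotent_general M hM p r hp hann
end

section
/- A Noetherian (t−1)-invertible Λ-module M is finitely generated as an abelian group (i.e., as a ℤ-module) if and only if there exists a polynomial q(t) = Σ_{i=0}^n a_i t^i ∈ Ann(M) with a_n = a_0 = 1. -/
/-!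
Let `R = Λ ⧸ Ann(M)` and let `x`, `x⁻¹` be the images of `t`, `t⁻¹` in `R`. A polynomial `q` with
leading and constant coefficient `1` and `q(x) = 0` exists iff `x` and `x⁻¹` are both integral
over `ℤ`: `x⁻¹` is a root of the monic polynomial `Xⁿ q(1/X)`, and conversely, from monic
relations `p(x) = 0` and `s(x⁻¹) = 0` with `deg s = m`, the polynomial `X^(m+1) p + X^m s(1/X)`
works. As `R` is generated by `x` and `x⁻¹`, their integrality makes `R` a finite `ℤ`-module, and
then so is the finitely generated `R`-module `M`. Conversely, if `M` is finite over `ℤ` then `R`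
embeds into `End_ℤ(M)`, which is integral over `ℤ`.
-/

open Polynomial

open LaurentPolynomial

section UnitIntegrality

variable {k A : Type*} [CommRing k] [CommRing A] [Algebra k A] {x y : A}

theorem aeval_reflect_eq_zero (hxy : x * y = 1) {s : k[X]} {N : ℕ} (hs : s.natDegree ≤ N)
    (hy : aeval y s = 0) : aeval x (reflect N s) = 0 := by
  let : Invertible y := ⟨x, hxy, mul_comm y x ▸ hxy⟩
  have h := eval₂_reflect_mul_pow (algebraMap k A) y N s hs
  rw [← aeval_def, ← aeval_def, hy] at h
  exact (isUnit_of_invertible y).pow N |>.mul_left_eq_zero.mp h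

theorem coeff_zero_reflect (N : ℕ) (s : k[X]) : (reflect N s).coeff 0 = s.coeff N := by
  rw [coeff_reflect, revAt_le (Nat.zero_le N), Nat.sub_zero]

theorem isIntegral_of_mul_eq_one_of_aeval_eq_zero (hxy : x * y = 1) {q : k[X]}
    (hq0 : q.coeff 0 = 1) (hqx : aeval x q = 0) : IsIntegral k y := by
  refine ⟨reflect q.natDegree q, monic_of_natDegree_le_of_coeff_eq_one q.natDegree
    (natDegree_reflect_le.trans (max_self _).le) ?_, ?_⟩
  · rwa [coeff_reflect, revAt_le le_rfl, Nat.sub_self]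
  · rw [← aeval_def]
    exact aeval_reflect_eq_zero (mul_comm x y ▸ hxy) le_rfl hqx

theorem exists_monic_coeff_zero_eq_one_aeval_eq_zero (hxy : x * y = 1) (hx : IsIntegral k x)
    (hy : IsIntegral k y) : ∃ q : k[X], q.Monic ∧ q.coeff 0 = 1 ∧ aeval x q = 0 := by
  cases subsingleton_or_nontrivial k
  · exact ⟨0, Subsingleton.elim _ _, Subsingleton.elim _ _, map_zero _⟩
  obtain ⟨p, hp, hpx⟩ := hx
  obtain ⟨s, hs, hsy⟩ := hy
  rw [← aeval_def] at hpx hsy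
  set m := s.natDegree
  have hr0 : (reflect m s).coeff 0 = 1 := by rw [coeff_zero_reflect]; exact hs
  have hrx : aeval x (reflect m s) = 0 := aeval_reflect_eq_zero hxy le_rfl hsy
  have hmon : (X ^ (m + 1) * p).Monic := (monic_X_pow _).mul hp
  refine ⟨X ^ (m + 1) * p + reflect m s, hmon.add_of_left ?_, ?_, ?_⟩
  · refine degree_lt_degree (natDegree_reflect_le.trans_lt ?_)
    rw [(monic_X_pow _).natDegree_mul hp, natDegree_X_pow, max_self]
    omega
  · simp [hr0]
  · simp [hpx, hrx]

theorem exists_monic_coeff_zero_eq_one_aeval_eq_zero_iff (hxy : x * y = 1) :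
    (∃ q : k[X], q.Monic ∧ q.coeff 0 = 1 ∧ aeval x q = 0) ↔ IsIntegral k x ∧ IsIntegral k y :=
  ⟨fun ⟨q, hq, hq0, hqx⟩ => ⟨⟨q, hq, by rwa [← aeval_def]⟩,
    isIntegral_of_mul_eq_one_of_aeval_eq_zero hxy hq0 hqx⟩,
    fun ⟨hx, hy⟩ => exists_monic_coeff_zero_eq_one_aeval_eq_zero hxy hx hy⟩

theorem Module.Finite.of_adjoin_eq_top {s : Set A} (hs : s.Finite)
    (hint : ∀ a ∈ s, IsIntegral k a) (htop : Algebra.adjoin k s = ⊤) : Module.Finite k A := by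
  have := fg_adjoin_of_finite hs hint
  rw [htop, Algebra.top_toSubmodule] at this
  exact ⟨this⟩

end UnitIntegrality

section Laurent

variable {R : Type*} [CommSemiring R]

theorem Polynomial.aeval_T_one (p : R[X]) : aeval (T 1 : R[T;T⁻¹]) p = toLaurent p := by
  rw [← toLaurent_X, ← toLaurentAlg_apply, aeval_algHom_apply, aeval_X_left_apply,
    toLaurentAlg_apply]

theorem LaurentPolynomial.adjoin_T_one_T_neg_one :
    Algebra.adjoin R {(T 1 : R[T;T⁻¹]), T (-1)} = ⊤ := by
  refine Algebra.eq_top_iff.mpr fun f => f.induction_on_mul_T fun p n => ?_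
  refine Subalgebra.mul_mem _ ?_ ?_
  · rw [← aeval_T_one]
    exact Algebra.adjoin_mono (Set.singleton_subset_iff.mpr (Set.mem_insert _ _))
      (aeval_mem_adjoin_singleton R _)
  · rw [show (-(n : ℤ)) = n * -1 by ring, ← T_pow]
    exact Subalgebra.pow_mem _ (Algebra.subset_adjoin (by simp)) n

end Laurent

section Annihilator

variable {k A M : Type*} [CommRing k] [CommRing A] [Algebra k A] [AddCommGroup M] [Module k M]
  [Module A M] [IsScalarTower k A M]

theorem Algebra.IsIntegral.quotient_annihilator [Module.Finite k M] :
    Algebra.IsIntegral k (A ⧸ Module.annihilator A M) := by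
  let ρ : A →ₐ[k] Module.End k M := Algebra.lsmul k k M
  have hρ : ∀ a, ρ a = 0 ↔ a ∈ Module.annihilator A M := fun a => by
    simp [ρ, LinearMap.ext_iff, Module.mem_annihilator]
  refine Algebra.IsIntegral.of_injective (Ideal.Quotient.liftₐ _ ρ fun a ha => (hρ a).2 ha) ?_
  exact RingHom.lift_injective_of_ker_le_ideal _ _ fun a ha => (hρ a).1 ha

theorem Module.Finite.of_isTorsionBySet {I : Ideal A} (hI : Module.IsTorsionBySet A M I)
    [Module.Finite A M] [Module.Finite k (A ⧸ I)] : Module.Finite k M := by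
  let := hI.module
  have : Module.Finite (A ⧸ I) M := Module.Finite.of_restrictScalars_finite A (A ⧸ I) M
  exact Module.Finite.trans (A ⧸ I) M

end Annihilator

theorem finite_over_int_iff_general (M : Type) [AddCommGroup M] [Module Λ M]
    [IsNoetherian Λ M] :
    Module.Finite ℤ M ↔
      ∃ q : Polynomial ℤ, q.Monic ∧ q.coeff 0 = 1 ∧
        ∀ v : M, (Polynomial.toLaurent q) • v = 0 := by
  set I := Module.annihilator Λ M
  set π := Ideal.Quotient.mkₐ ℤ I
  have hxy : π (T 1) * π (T (-1)) = 1 := by rw [← map_mul, ← T_add]; simp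
  have hann : ∀ q : ℤ[X], (∀ v : M, toLaurent q • v = 0) ↔ aeval (π (T 1)) q = 0 := fun q => by
    rw [aeval_algHom_apply, aeval_T_one, Ideal.Quotient.mkₐ_eq_mk, Ideal.Quotient.eq_zero_iff_mem,
      Module.mem_annihilator]
  simp_rw [hann, exists_monic_coeff_zero_eq_one_aeval_eq_zero_iff hxy]
  constructor
  · intro _
    have := Algebra.IsIntegral.quotient_annihilator (k := ℤ) (A := Λ) (M := M)
    exact ⟨Algebra.IsIntegral.isIntegral _, Algebra.IsIntegral.isIntegral _⟩
  · rintro ⟨hx, hy⟩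
    have hgen : Algebra.adjoin ℤ {π (T 1), π (T (-1))} = ⊤ := by
      rw [← Set.image_pair, Algebra.adjoin_image, adjoin_T_one_T_neg_one, Algebra.map_top,
        AlgHom.range_eq_top]
      exact Ideal.Quotient.mkₐ_surjective ℤ I
    have : Module.Finite ℤ (Λ ⧸ I) :=
      .of_adjoin_eq_top (Set.toFinite _) (by simp [hx, hy]) hgen
    exact .of_isTorsionBySet (Module.isTorsionBySet_annihilator Λ M)

/-- A Noetherian (t−1)-invertible Λ-module is finitely generated over ℤ iff its annihilator
contains a polynomial with leading coefficient and constant coefficient equal to 1. -/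
theorem finite_over_int_iff (M : Type) [AddCommGroup M] [Module Λ M]
    [IsNoetherian Λ M]
    (hM : Function.Bijective (fun v : M => (tL - 1) • v)) :
    Module.Finite ℤ M ↔
      ∃ q : Polynomial ℤ, q.Monic ∧ q.coeff 0 = 1 ∧
        ∀ v : M, (Polynomial.toLaurent q) • v = 0 :=
  finite_over_int_iff_general M
end

section
/- Every Noetherian ℤ-torsion (t−1)-invertible Λ-module is finitely generated as an abelian group (i.e., as a ℤ-module). -/
open Polynomial

/-!
Since `M` is finitely generated over `Λ` and `t - 1` acts surjectively, Nakayama's lemma gives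
`r ∈ Λ` with `r ≡ 1 mod (t - 1)` and `r • M = 0`; clearing denominators, `W(t)` kills `M` for
some `W ∈ ℤ[X]` with `W(1) = 1`. Being finitely generated and `ℤ`-torsion, `M` is also killed by
some `n ≠ 0`. If `n = p` is prime, the image `S` of `Λ` in `End M` is an `𝔽_p`-algebra generated
by `t` and `t⁻¹`, and `t` is a root of the nonzero polynomial `W mod p`, so `t` and `t⁻¹` are
integral over `𝔽_p`, `S` is finite, and so is `M`. The general case follows by induction on the
prime factors of `n`, using the `p`-torsion submodule and the quotient by it.
-/

open LaurentPolynomial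

theorem aeval_T_one_eq_map_toLaurent {S : Type*} [CommRing S] (f : Λ →+* S) (W : ℤ[X]) :
    aeval (f (T 1)) W = f (toLaurent W) := by
  induction W using Polynomial.induction_on' with
  | add p q hp hq => simp [hp, hq]
  | monomial n a => simp [← map_pow, T_pow]

theorem finite_int_of_surjective_of_prime_eq_zero {S : Type*} [CommRing S] (f : Λ →+* S)
    (hf : Function.Surjective f) {p : ℕ} (hp : p.Prime) (hpS : (p : S) = 0) {W : ℤ[X]}
    (hW1 : W.eval 1 = 1) (hWS : f (toLaurent W) = 0) : Module.Finite ℤ S := by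
  nontriviality S
  have : Fact p.Prime := ⟨hp⟩
  have : CharP S p := (CharP.charP_iff_prime_eq_zero hp).mpr hpS
  let : Algebra (ZMod p) S := ZMod.algebra S p
  let : Invertible (f (T 1)) := Invertible.map f (T 1)
  have hT : IsAlgebraic (ZMod p) (f (T 1)) := by
    refine ⟨W.map (algebraMap ℤ (ZMod p)), fun h => ?_, ?_⟩
    · simpa [hW1] using congrArg (eval 1) h
    · rw [aeval_map_algebraMap, aeval_T_one_eq_map_toLaurent, hWS]
  have hgen : Algebra.adjoin (ZMod p) {f (T 1), ⅟(f (T 1))} = ⊤ := by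
    refine Algebra.eq_top_iff.mpr fun s => ?_
    obtain ⟨g, rfl⟩ := hf s
    induction g using LaurentPolynomial.induction_on' with
    | add g h hg hh => rw [map_add]; exact add_mem hg hh
    | C_mul_T n a =>
      rw [map_mul, ← RingHom.comp_apply, eq_intCast]
      refine mul_mem (intCast_mem _ a) ?_
      obtain ⟨k, rfl | rfl⟩ := n.eq_nat_or_neg
      · rw [← mul_one (k : ℤ), ← T_pow, map_pow]
        exact pow_mem (Algebra.subset_adjoin (by simp)) k
      · rw [show -(k : ℤ) = k * -1 by ring, ← T_pow, map_pow, ← invOf_T, map_invOf]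
        exact pow_mem (Algebra.subset_adjoin (by simp)) k
  have : Module.Finite (ZMod p) S := by
    refine ⟨?_⟩
    rw [← Algebra.top_toSubmodule, ← hgen]
    refine fg_adjoin_of_finite (Set.toFinite _) ?_
    rintro _ (rfl | rfl)
    · exact isAlgebraic_iff_isIntegral.mp hT
    · exact isAlgebraic_iff_isIntegral.mp hT.invOf
  exact Module.Finite.trans (ZMod p) S

theorem finite_int_of_prime_mem_annihilator {M : Type*} [AddCommGroup M] [Module Λ M]
    [Module.Finite Λ M] {p : ℕ} (hp : p.Prime) (hpM : (p : Λ) ∈ Module.annihilator Λ M)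
    {W : ℤ[X]} (hW1 : W.eval 1 = 1) (hWM : toLaurent W ∈ Module.annihilator Λ M) :
    Module.Finite ℤ M := by
  let _ : Module (Λ ⧸ Module.annihilator Λ M) M := Module.quotientAnnihilator
  have := (Module.isTorsionBySet_annihilator Λ M).isScalarTower (S := Λ)
  have := Module.Finite.of_restrictScalars_finite Λ (Λ ⧸ Module.annihilator Λ M) M
  have := finite_int_of_surjective_of_prime_eq_zero (Ideal.Quotient.mk _)
    Ideal.Quotient.mk_surjective hp
    (by rwa [← map_natCast (Ideal.Quotient.mk _), Ideal.Quotient.eq_zero_iff_mem]) hW1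
    (Ideal.Quotient.eq_zero_iff_mem.mpr hWM)
  exact Module.Finite.trans (Λ ⧸ Module.annihilator Λ M) M

theorem finite_int_of_natCast_mem_annihilator {W : ℤ[X]} (hW1 : W.eval 1 = 1) {n : ℕ}
    (hn : n ≠ 0) : ∀ (M : Type) [AddCommGroup M] [Module Λ M] [IsNoetherian Λ M],
    (n : Λ) ∈ Module.annihilator Λ M → toLaurent W ∈ Module.annihilator Λ M →
    Module.Finite ℤ M := by
  induction n using induction_on_primes with
  | zero => exact absurd rfl hn
  | one =>
    intro M _ _ _ h1 _
    have := Module.annihilator_eq_top_iff.mp ((Ideal.eq_top_iff_one _).mpr (by simpa using h1))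
    infer_instance
  | prime_mul p a hp ih =>
    intro M _ _ _ hpa hWM
    let K := Submodule.torsionBy Λ M (p : Λ)
    have hK : Module.Finite ℤ K := finite_int_of_prime_mem_annihilator hp
      (Module.mem_annihilator.mpr (Submodule.smul_torsionBy _))
      hW1 (K.subtype.annihilator_le_of_injective K.injective_subtype hWM)
    have hQ : Module.Finite ℤ (M ⧸ K) := by
      refine ih (right_ne_zero_of_mul hn) _ (Module.mem_annihilator.mpr fun x => ?_)
        (K.mkQ.annihilator_le_of_surjective K.mkQ_surjective hWM)
      induction x using Submodule.Quotient.induction_on with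
      | _ m =>
        rw [← Submodule.Quotient.mk_smul, Submodule.Quotient.mk_eq_zero,
          Submodule.mem_torsionBy_iff, smul_smul, ← Nat.cast_mul]
        exact Module.mem_annihilator.mp hpa m
    exact .of_exact (f := K.subtype.restrictScalars ℤ) (g := K.mkQ.restrictScalars ℤ)
      (LinearMap.exact_subtype_mkQ K) K.mkQ_surjective

theorem exists_natCast_mem_annihilator {A M : Type*} [CommRing A] [AddCommGroup M] [Module A M]
    [Module.Finite A M] (htor : ∀ v : M, ∃ n : ℕ, 0 < n ∧ n • v = 0) :
    ∃ n : ℕ, n ≠ 0 ∧ (n : A) ∈ Module.annihilator A M := by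
  classical
  obtain ⟨G, hG⟩ := Module.Finite.fg_top (R := A) (M := M)
  choose k hk0 hk using htor
  have htop : (⊤ : Submodule A M) ≤ Submodule.torsionBy A M (∏ g ∈ G, k g : ℕ) := by
    rw [← hG, Submodule.span_le]
    intro g hg
    obtain ⟨c, hc⟩ := Finset.dvd_prod_of_mem k hg
    rw [SetLike.mem_coe, Submodule.mem_torsionBy_iff, Nat.cast_smul_eq_nsmul, hc,
      mul_nsmul, hk, nsmul_zero]
  exact ⟨_, Finset.prod_ne_zero_iff.mpr fun g _ => (hk0 g).ne',
    Module.mem_annihilator.mpr fun m => htop Submodule.mem_top⟩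

theorem exists_eval_one_eq_one_toLaurent_mem_annihilator {M : Type*} [AddCommGroup M]
    [Module Λ M] [Module.Finite Λ M] (hM : Function.Surjective fun v : M => (tL - 1) • v) :
    ∃ W : ℤ[X], W.eval 1 = 1 ∧ toLaurent W ∈ Module.annihilator Λ M := by
  have hle : (⊤ : Submodule Λ M) ≤ Ideal.span {tL - 1} • ⊤ := fun m _ => by
    obtain ⟨v, rfl⟩ := hM m
    exact Submodule.smul_mem_smul (Ideal.mem_span_singleton_self _) Submodule.mem_top
  obtain ⟨r, hr1, hr⟩ := Submodule.exists_sub_one_mem_and_smul_eq_zero_of_fg_of_le_smul _ ⊤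
    Module.Finite.fg_top hle
  obtain ⟨g, hg⟩ := Ideal.mem_span_singleton'.mp hr1
  obtain ⟨k, G, hG⟩ := exists_T_pow g
  refine ⟨X ^ k + G * (X - 1), by simp, Module.mem_annihilator.mpr fun m => ?_⟩
  have : toLaurent (X ^ k + G * (X - 1)) = T k * r := by
    rw [← sub_add_cancel r 1, ← hg]
    simp only [map_add, map_mul, map_sub, toLaurent_X_pow, toLaurent_X, toLaurent_one, hG, tL,
      T_mul]
    ring
  rw [this, mul_smul, hr m Submodule.mem_top, smul_zero]

/-- A Noetherian ℤ-torsion (t−1)-invertible Λ-module is finitely generated over ℤ. -/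
theorem zTorsion_invertible_finitely_generated (M : Type) [AddCommGroup M] [Module Λ M]
    [IsNoetherian Λ M]
    (hM : Function.Bijective (fun v : M => (tL - 1) • v))
    (htor : ∀ v : M, ∃ n : ℕ, 0 < n ∧ n • v = 0) :
    Module.Finite ℤ M := by
  obtain ⟨n, hn, hnM⟩ := exists_natCast_mem_annihilator (A := Λ) htor
  obtain ⟨W, hW1, hWM⟩ := exists_eval_one_eq_one_toLaurent_mem_annihilator hM.2
  exact finite_int_of_natCast_mem_annihilator hW1 hn M hnM hWM
end

section
/- Every Noetherian ℤ-torsion (t−1)-invertible Λ-module is finite, i.e., it is a finite abelian group. -/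
open Polynomial

/-!
Since `t - 1` acts surjectively on the finitely generated `Λ`-module `M`, Nakayama's lemma gives
an `r ∈ Λ` with `r ≡ 1 mod (t - 1)` that annihilates `M`. If `M` is killed by a prime `p`, then
`M` is a finitely generated module over `Λ ⧸ ann M`, a ring of characteristic dividing `p` that is
generated by the unit `t` and in which `t` is a root of the reduction mod `p` of the polynomial
`r tⁿ`; that reduction is nonzero because its value at `1` is `r(1) = 1`. Hence `Λ ⧸ ann M` is
finite-dimensional over `𝔽_p`, so finite, and so is `M`. In general `M` has an exponent `N`, and
induction on `N` along `0 → pM → M → M/pM → 0` reduces to the prime case.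
-/

open LaurentPolynomial

theorem LaurentPolynomial.adjoin_T_one_T_neg_one_eq_top (R : Type*) [CommSemiring R] :
    Algebra.adjoin R {(T 1 : R[T;T⁻¹]), T (-1)} = ⊤ := by
  refine eq_top_iff.mpr fun f _ => ?_
  induction f using LaurentPolynomial.induction_on' with
  | add f g hf hg => exact add_mem (hf trivial) (hg trivial)
  | C_mul_T n a =>
    rw [C_eq_algebraMap, ← Algebra.smul_def]
    refine Subalgebra.smul_mem _ ?_ a
    obtain ⟨k, rfl | rfl⟩ := Int.eq_nat_or_neg n
    · rw [← mul_one (k : ℤ), ← T_pow]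
      exact pow_mem (Algebra.subset_adjoin (by simp)) k
    · rw [← mul_neg_one (k : ℤ), ← T_pow]
      exact pow_mem (Algebra.subset_adjoin (by simp)) k

theorem Module.Finite.of_isAlgebraic_of_adjoin_eq_top {K A : Type*} [Field K] [CommRing A]
    [Algebra K A] {x y : A} (hxy : x * y = 1) (hx : IsAlgebraic K x)
    (htop : Algebra.adjoin K {x, y} = ⊤) : Module.Finite K A := by
  let : Invertible x := ⟨y, by rw [mul_comm, hxy], hxy⟩
  refine ⟨?_⟩
  rw [← Algebra.top_toSubmodule, ← htop]
  refine fg_adjoin_of_finite (Set.toFinite _) ?_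
  rintro z (rfl | rfl)
  · exact hx.isIntegral
  · exact hx.invOf.isIntegral

theorem exists_sub_one_mem_span_and_smul_eq_zero {R M : Type*} [CommRing R] [AddCommGroup M]
    [Module R M] [Module.Finite R M] {a : R} (ha : Function.Surjective fun v : M => a • v) :
    ∃ r : R, r - 1 ∈ Ideal.span {a} ∧ ∀ v : M, r • v = 0 := by
  obtain ⟨r, hr, hrM⟩ := Submodule.exists_sub_one_mem_and_smul_eq_zero_of_fg_of_le_smul
    (Ideal.span {a}) (⊤ : Submodule R M) Module.Finite.fg_top (fun v _ => by
      obtain ⟨w, rfl⟩ := ha v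
      rw [Submodule.ideal_span_singleton_smul]
      exact Submodule.smul_mem_pointwise_smul w a ⊤ trivial)
  exact ⟨r, hr, fun v => hrM v trivial⟩

theorem surjective_smul_quotient {R M : Type*} [Ring R] [AddCommGroup M] [Module R M] {a : R}
    (ha : Function.Surjective fun v : M => a • v) (N : Submodule R M) :
    Function.Surjective fun x : M ⧸ N => a • x := by
  intro x
  obtain ⟨v, rfl⟩ := N.mkQ_surjective x
  obtain ⟨w, rfl⟩ := ha v
  exact ⟨N.mkQ w, (N.mkQ.map_smul a w).symm⟩

theorem surjective_smul_range {R M M' : Type*} [Semiring R] [AddCommMonoid M] [Module R M]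
    [AddCommMonoid M'] [Module R M'] {a : R} (ha : Function.Surjective fun v : M => a • v)
    (f : M →ₗ[R] M') : Function.Surjective fun x : LinearMap.range f => a • x := by
  rintro ⟨_, v, rfl⟩
  obtain ⟨w, rfl⟩ := ha v
  exact ⟨⟨f w, w, rfl⟩, Subtype.ext (f.map_smul a w).symm⟩

theorem exists_pos_nsmul_eq_zero {R M : Type*} [Semiring R] [AddCommMonoid M] [Module R M]
    [Module.Finite R M] (htor : ∀ v : M, ∃ n : ℕ, 0 < n ∧ n • v = 0) :
    ∃ N : ℕ, 0 < N ∧ ∀ v : M, N • v = 0 := by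
  classical
  obtain ⟨S, hS⟩ := Module.Finite.fg_top (R := R) (M := M)
  choose n hn0 hn using htor
  refine ⟨∏ s ∈ S, n s, Finset.prod_pos fun s _ => hn0 s, fun v => ?_⟩
  have hle : Submodule.span R (S : Set M) ≤ LinearMap.ker ((∏ s ∈ S, n s) • LinearMap.id) := by
    refine Submodule.span_le.mpr fun s hs => ?_
    obtain ⟨k, hk⟩ := Finset.dvd_prod_of_mem n hs
    simp [hk, mul_comm (n s), mul_smul, hn s]
  exact hle (hS ▸ Submodule.mem_top : v ∈ Submodule.span R (S : Set M))

theorem finite_quotient_of_natCast_mem_of_eval₂_ne_zero {p : ℕ} [Fact p.Prime] {I : Ideal Λ}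
    (hpI : (p : Λ) ∈ I) {r : Λ} (hrI : r ∈ I)
    (hr : LaurentPolynomial.eval₂ (Int.castRingHom (ZMod p)) 1 r ≠ 0) : Finite (Λ ⧸ I) := by
  -- `ringChar` rather than `p`, since `I` may be `⊤`
  let : Algebra (ZMod p) (Λ ⧸ I) := ZMod.algebra' _ (ringChar (Λ ⧸ I))
    (ringChar.dvd (by rwa [← map_natCast (Ideal.Quotient.mk I), Ideal.Quotient.eq_zero_iff_mem]))
  have : IsScalarTower ℤ (ZMod p) (Λ ⧸ I) := .of_algebraMap_eq' (RingHom.ext_int _ _)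
  let π := Ideal.Quotient.mkₐ ℤ I
  have halg : IsAlgebraic (ZMod p) (π (T 1)) := by
    obtain ⟨n, g, hg⟩ := exists_T_pow r
    refine ⟨g.map (algebraMap ℤ (ZMod p)), fun h => hr ?_, ?_⟩
    · have := congrArg (Polynomial.eval 1) h
      rw [Polynomial.eval_map, Polynomial.eval_zero, ← Units.val_one, ← eval₂_toLaurent, hg] at this
      simpa using this
    · have hπg := Polynomial.aeval_algHom_apply (π.comp toLaurentAlg) X g
      simp only [AlgHom.coe_comp, Function.comp_apply, coe_toLaurentAlg, Polynomial.toLaurent_X,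
        aeval_X_left, AlgHom.coe_id, id_eq] at hπg
      rw [aeval_map_algebraMap, hπg, hg, Ideal.Quotient.mkₐ_eq_mk, Ideal.Quotient.eq_zero_iff_mem]
      exact I.mul_mem_right _ hrI
  have hunit : π (T 1) * π (T (-1)) = 1 := by rw [← map_mul, ← T_add]; simp
  have htop : Algebra.adjoin (ZMod p) {π (T 1), π (T (-1))} = ⊤ := by
    refine eq_top_iff.mpr fun y _ => ?_
    obtain ⟨f, rfl⟩ := Ideal.Quotient.mkₐ_surjective ℤ I y
    have hf : π f ∈ Algebra.adjoin ℤ (π '' {T 1, T (-1)}) := by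
      rw [Algebra.adjoin_image, adjoin_T_one_T_neg_one_eq_top]
      exact Subalgebra.mem_map.mpr ⟨f, Algebra.mem_top, rfl⟩
    rw [Set.image_pair] at hf
    have hle : Algebra.adjoin ℤ {π (T 1), π (T (-1))} ≤
        (Algebra.adjoin (ZMod p) {π (T 1), π (T (-1))}).restrictScalars ℤ :=
      Algebra.adjoin_le Algebra.subset_adjoin
    exact hle hf
  have := Module.Finite.of_isAlgebraic_of_adjoin_eq_top hunit halg htop
  exact Module.finite_of_finite (ZMod p)

section TorsionModule

variable {M : Type*} [AddCommGroup M] [Module Λ M]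

theorem finite_of_prime_nsmul_eq_zero {p : ℕ} [Fact p.Prime] [Module.Finite Λ M]
    (hM : Function.Surjective fun v : M => (tL - 1) • v) (hp : ∀ v : M, p • v = 0) :
    Finite M := by
  obtain ⟨r, hr, hrM⟩ := exists_sub_one_mem_span_and_smul_eq_zero hM
  let := Module.quotientAnnihilator (R := Λ) (M := M)
  have : Module.Finite (Λ ⧸ Module.annihilator Λ M) M :=
    Module.Finite.of_restrictScalars_finite Λ _ M
  have hr1 : LaurentPolynomial.eval₂ (Int.castRingHom (ZMod p)) 1 r = 1 := by
    obtain ⟨c, hc⟩ := Ideal.mem_span_singleton'.mp hr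
    rw [← sub_add_cancel r 1, ← hc]
    simp [tL]
  have : Finite (Λ ⧸ Module.annihilator Λ M) :=
    finite_quotient_of_natCast_mem_of_eval₂_ne_zero (p := p)
      (Module.mem_annihilator.mpr fun v => by rw [Nat.cast_smul_eq_nsmul, hp v])
      (Module.mem_annihilator.mpr hrM) (hr1 ▸ one_ne_zero)
  exact Module.finite_of_finite (Λ ⧸ Module.annihilator Λ M)

theorem finite_of_nsmul_eq_zero {n : ℕ} (hn : n ≠ 0) [IsNoetherian Λ M]
    (hM : Function.Surjective fun v : M => (tL - 1) • v) (htor : ∀ v : M, n • v = 0) :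
    Finite M := by
  induction n using induction_on_primes generalizing M with
  | zero => exact absurd rfl hn
  | one =>
    have : Subsingleton M := ⟨fun v w => by simpa using (htor v).trans (htor w).symm⟩
    infer_instance
  | prime_mul p a hp ih =>
    have : Fact p.Prime := ⟨hp⟩
    let K := LinearMap.range (p • LinearMap.id : M →ₗ[Λ] M)
    have : Finite K := ih (right_ne_zero_of_mul hn) (surjective_smul_range hM _) <| by
      rintro ⟨_, v, rfl⟩
      ext
      simp [← mul_smul, mul_comm a, htor v]
    have : Finite (M ⧸ K) := finite_of_prime_nsmul_eq_zero (surjective_smul_quotient hM K) <| by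
      intro x
      obtain ⟨v, rfl⟩ := K.mkQ_surjective x
      rw [← map_nsmul, Submodule.mkQ_apply, Submodule.Quotient.mk_eq_zero]
      exact ⟨v, rfl⟩
    have : Finite (M ⧸ K.toAddSubgroup) := ‹Finite (M ⧸ K)›
    exact Finite.of_addSubgroup_quotient K.toAddSubgroup

end TorsionModule

/-- A Noetherian ℤ-torsion (t−1)-invertible Λ-module is a finite abelian group. -/
theorem zTorsion_invertible_finite (M : Type) [AddCommGroup M] [Module Λ M]
    [IsNoetherian Λ M]
    (hM : Function.Bijective (fun v : M => (tL - 1) • v))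
    (htor : ∀ v : M, ∃ n : ℕ, 0 < n ∧ n • v = 0) :
    Finite M := by
  obtain ⟨N, hN, hNM⟩ := exists_pos_nsmul_eq_zero (R := Λ) htor
  exact finite_of_nsmul_eq_zero hN.ne' hM.2 hNM
end

section
/- Let G = ⊕_{i=1}^n (ℤ/2^{r_i}ℤ)^{m_i} be a finite abelian 2-group, where the exponents r_i ≥ 1 are pairwise distinct and m_j = 1 for at least one index j. Then G admits no structure of (t−1)-invertible Λ-module; equivalently, there is no group automorphism h of G such that h − id is also an automorphism of G. -/
private def lvl (G : Type*) [AddCommGroup G] (k : ℕ) : AddSubgroup G where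
  carrier := {v | (∃ w, v = k • w) ∧ 2 • v = 0}
  zero_mem' := ⟨⟨0, (smul_zero _).symm⟩, smul_zero _⟩
  add_mem' := by
    rintro a b ⟨⟨wa, rfl⟩, ha⟩ ⟨⟨wb, rfl⟩, hb⟩
    exact ⟨⟨wa + wb, (smul_add _ _ _).symm⟩, by rw [smul_add, ha, hb, add_zero]⟩
  neg_mem' := by
    rintro a ⟨⟨w, rfl⟩, ha⟩
    exact ⟨⟨-w, (smul_neg _ _).symm⟩, by rw [smul_neg, ha, neg_zero]⟩

private lemma mem_lvl {G : Type*} [AddCommGroup G] {k : ℕ} {v : G} :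
    v ∈ lvl G k ↔ (∃ w, v = k • w) ∧ 2 • v = 0 := Iff.rfl

private lemma key_abstract {G : Type*} [AddCommGroup G] [Finite G]
    (h : G ≃+ G) (hinj : Function.Injective (fun v : G => h v - v))
    (H K : AddSubgroup G) (hKH : (K : Set G) ⊆ (H : Set G))
    (hH : ∀ v ∈ H, h v ∈ H) (hK : ∀ v ∈ K, h v ∈ K) (hK' : ∀ v ∈ K, h.symm v ∈ K)
    (x₀ : G) (hx₀H : x₀ ∈ H) (hx₀K : x₀ ∉ K)
    (hdich : ∀ y ∈ H, y ∈ K ∨ y - x₀ ∈ K) : False := by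
  have hfK : ∀ x ∈ H, h x - x ∈ K := by
    intro x hx
    by_cases hxK : x ∈ K
    · exact K.sub_mem (hK x hxK) hxK
    · have hhx : h x ∈ H := hH x hx
      have hhxK : h x ∉ K := fun hc => hxK (by simpa using hK' _ hc)
      rcases hdich x hx with h1 | h1
      · exact absurd h1 hxK
      rcases hdich (h x) hhx with h2 | h2
      · exact absurd h2 hhxK
      have := K.sub_mem h2 h1
      simpa using this
  let g : H → K := fun x => ⟨h x - (x : G), hfK x x.2⟩
  have hginj : Function.Injective g := by
    intro a b hab
    have : h a - (a : G) = h b - (b : G) := congrArg Subtype.val hab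
    exact Subtype.ext (hinj this)
  have h1 : Nat.card H ≤ Nat.card K := Nat.card_le_card_of_injective g hginj
  have h2 : Nat.card K < Nat.card H := by
    have e1 : Nat.card K = (K : Set G).ncard := Nat.card_coe_set_eq _
    have e2 : Nat.card H = (H : Set G).ncard := Nat.card_coe_set_eq _
    rw [e1, e2]
    exact Set.ncard_lt_ncard ⟨hKH, fun hc => hx₀K (hc hx₀H)⟩ (Set.toFinite _)
  omega

private lemma two_pow_mul_pred (s : ℕ) (hs : 1 ≤ s) : (2:ℕ) * 2 ^ (s - 1) = 2 ^ s := by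
  conv_rhs => rw [show s = (s - 1) + 1 by omega]
  rw [pow_succ']

private lemma comp_lemma (s t : ℕ) (hs : 1 ≤ s) (ht : 1 ≤ t) (x w : ZMod (2 ^ t))
    (hx : x = 2 ^ (s - 1) • w) (h2 : 2 • x = 0) :
    (∃ u, x = 2 ^ s • u) ∨ (t = s ∧ x = ((2 ^ (s - 1) : ℕ) : ZMod (2 ^ t))) := by
  haveI : NeZero ((2:ℕ) ^ t) := ⟨pow_ne_zero _ two_ne_zero⟩
  have hw : ((w.val : ℕ) : ZMod (2 ^ t)) = w := ZMod.natCast_zmod_val w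
  have hx' : x = ((2 ^ (s - 1) * w.val : ℕ) : ZMod (2 ^ t)) := by
    rw [hx, nsmul_eq_mul, Nat.cast_mul, hw]
  have hdvd2 : (2:ℕ) ^ t ∣ 2 ^ s * w.val := by
    have key0 : ((2 * (2 ^ (s - 1) * w.val) : ℕ) : ZMod (2 ^ t)) = 0 := by
      rw [Nat.cast_mul, ← nsmul_eq_mul, ← hx']
      exact h2
    rw [← mul_assoc, two_pow_mul_pred s hs] at key0
    exact (ZMod.natCast_eq_zero_iff _ _).mp key0
  rcases lt_trichotomy t s with hts | hts | hts
  · left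
    refine ⟨0, ?_⟩
    rw [smul_zero, hx']
    exact (ZMod.natCast_eq_zero_iff _ _).mpr
      (dvd_mul_of_dvd_left (pow_dvd_pow 2 (by omega)) _)
  · rcases Nat.even_or_odd w.val with ⟨k, hk⟩ | ⟨k, hk⟩
    · left
      refine ⟨0, ?_⟩
      rw [smul_zero, hx', hk]
      refine (ZMod.natCast_eq_zero_iff _ _).mpr ⟨k, ?_⟩
      rw [hts, show k + k = 2 * k by omega, ← mul_assoc, mul_comm ((2:ℕ) ^ (s-1)) 2,
        two_pow_mul_pred s hs]
    · right
      refine ⟨hts, ?_⟩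
      have e : 2 ^ (s - 1) * w.val = 2 ^ s * k + 2 ^ (s - 1) := by
        rw [hk, mul_add, mul_one, ← mul_assoc, mul_comm ((2:ℕ) ^ (s-1)) 2,
          two_pow_mul_pred s hs]
      rw [hx', e, Nat.cast_add, Nat.cast_mul, hts, ZMod.natCast_self, zero_mul, zero_add]
  · -- s < t
    have hdvdw : (2:ℕ) ^ (t - s) ∣ w.val := by
      have h' : (2:ℕ) ^ s * 2 ^ (t - s) ∣ 2 ^ s * w.val := by
        rw [← pow_add, show s + (t - s) = t by omega]
        exact hdvd2
      exact (mul_dvd_mul_iff_left (a := (2:ℕ) ^ s) (pow_ne_zero _ two_ne_zero)).mp h'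
    obtain ⟨c, hc⟩ := hdvdw
    left
    refine ⟨((2 ^ (t - 1 - s) * c : ℕ) : ZMod (2 ^ t)), ?_⟩
    rw [hx', hc, nsmul_eq_mul, ← Nat.cast_mul]
    congr 1
    rw [← mul_assoc, ← mul_assoc, ← pow_add, ← pow_add]
    congr 2
    omega

/-- Let `G = ⊕_{i=1}^n (ℤ/2^{r_i}ℤ)^{m_i}` with the `r_i ≥ 1` pairwise distinct and `m_j = 1`
for some index `j`. Then there is no automorphism `h` of `G` such that `h − id` is also an
automorphism of `G`, i.e. `G` admits no structure of `(t−1)`-invertible `ℤ[t,t⁻¹]`-module. -/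
theorem no_t_sub_one_invertible_structure
    (n : ℕ) (r m : Fin n → ℕ)
    (hr : ∀ i, 1 ≤ r i) (hm : ∀ i, 1 ≤ m i)
    (hdist : Function.Injective r)
    (hone : ∃ j, m j = 1) :
    ¬ ∃ h : (∀ i : Fin n, Fin (m i) → ZMod (2 ^ r i)) ≃+
            (∀ i : Fin n, Fin (m i) → ZMod (2 ^ r i)),
        Function.Bijective (fun v => h v - v) := by
  rintro ⟨h, hbij⟩
  obtain ⟨j, hj⟩ := hone
  haveI : ∀ i : Fin n, NeZero ((2:ℕ) ^ r i) := fun i => ⟨pow_ne_zero _ two_ne_zero⟩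
  have hs : 1 ≤ r j := hr j
  set H : AddSubgroup (∀ i : Fin n, Fin (m i) → ZMod (2 ^ r i)) :=
    lvl _ (2 ^ (r j - 1)) with hH_def
  set K : AddSubgroup (∀ i : Fin n, Fin (m i) → ZMod (2 ^ r i)) :=
    lvl _ (2 ^ (r j)) with hK_def
  have hpres : ∀ (e : (∀ i : Fin n, Fin (m i) → ZMod (2 ^ r i)) ≃+
      (∀ i : Fin n, Fin (m i) → ZMod (2 ^ r i))) (k : ℕ) v,
      v ∈ lvl _ k → e v ∈ lvl _ k := by
    rintro e k v ⟨⟨w, rfl⟩, hv⟩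
    exact ⟨⟨e w, map_nsmul e k w⟩, by rw [← map_nsmul, hv, map_zero]⟩
  have hKH : (K : Set (∀ i : Fin n, Fin (m i) → ZMod (2 ^ r i))) ⊆ (H : Set (∀ i : Fin n, Fin (m i) → ZMod (2 ^ r i))) := by
    rintro v ⟨⟨w, rfl⟩, hv⟩
    refine ⟨⟨2 • w, ?_⟩, hv⟩
    rw [smul_smul, mul_comm, two_pow_mul_pred _ hs]
  -- the special element x₀
  set a₀ : Fin (m j) := ⟨0, hm j⟩ with ha₀
  have hFinj : ∀ a : Fin (m j), a = a₀ := by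
    intro a
    have h1 := a.isLt
    have h2 : (a₀ : ℕ) = 0 := rfl
    exact Fin.ext (by omega)
  set c : ZMod (2 ^ r j) := ((2 ^ (r j - 1) : ℕ) : ZMod (2 ^ r j)) with hc_def
  have hc_ne : c ≠ 0 := by
    intro hc
    rw [hc_def, ZMod.natCast_eq_zero_iff] at hc
    have h1 : (2:ℕ) ^ r j ≤ 2 ^ (r j - 1) := Nat.le_of_dvd (by positivity) hc
    have h2 : (2:ℕ) ^ (r j - 1) < 2 ^ r j := Nat.pow_lt_pow_right (by norm_num) (by omega)
    omega
  set x₀ : ∀ i : Fin n, Fin (m i) → ZMod (2 ^ r i) :=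
    Pi.single j (fun _ => c) with hx₀_def
  have hc2 : (2 : ℕ) • c = 0 := by
    rw [hc_def, nsmul_eq_mul, ← Nat.cast_mul, two_pow_mul_pred _ hs, ZMod.natCast_self]
  have hx₀2 : (2 : ℕ) • x₀ = 0 := by
    funext i a
    by_cases hij : i = j
    · subst hij
      simp only [hx₀_def, Pi.smul_apply, Pi.single_eq_same, Pi.zero_apply]
      exact hc2
    · simp [hx₀_def, Pi.single_eq_of_ne hij]
  have hx₀H : x₀ ∈ H := by
    refine ⟨⟨Pi.single j (fun _ => (1 : ZMod (2 ^ r j))), ?_⟩, hx₀2⟩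
    funext i a
    by_cases hij : i = j
    · subst hij
      simp only [hx₀_def, Pi.smul_apply, Pi.single_eq_same]
      rw [hc_def, nsmul_eq_mul, mul_one]
    · simp [hx₀_def, Pi.single_eq_of_ne hij]
  have hx₀K : x₀ ∉ K := by
    rintro ⟨⟨w, hw⟩, -⟩
    have hcomp := congrFun (congrFun hw j) a₀
    simp only [hx₀_def, Pi.single_eq_same, Pi.smul_apply] at hcomp
    apply hc_ne
    rw [hcomp, nsmul_eq_mul, ZMod.natCast_self, zero_mul]
  have hdich : ∀ y ∈ H, y ∈ K ∨ y - x₀ ∈ K := by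
    rintro y ⟨⟨w, rfl⟩, h2⟩
    have hcomp : ∀ (i : Fin n) (a : Fin (m i)),
        (∃ u, (2 ^ (r j - 1) • w) i a = 2 ^ (r j) • u) ∨
          (r i = r j ∧ (2 ^ (r j - 1) • w) i a = ((2 ^ (r j - 1) : ℕ) : ZMod (2 ^ r i))) := by
      intro i a
      refine comp_lemma (r j) (r i) hs (hr i) _ (w i a) (by simp) ?_
      have := congrFun (congrFun h2 i) a
      simpa using this
    by_cases hy0 : (2 ^ (r j - 1) • w) j a₀ = 0
    · left
      have hall : ∀ i a, ∃ u, (2 ^ (r j - 1) • w) i a = 2 ^ (r j) • u := by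
        intro i a
        rcases hcomp i a with h' | ⟨hts, hval⟩
        · exact h'
        · have hij : i = j := hdist hts
          subst hij
          rw [hFinj a] at hval
          exact absurd (hval.symm.trans hy0) hc_ne
      choose u hu using hall
      refine ⟨⟨fun i a => u i a, ?_⟩, h2⟩
      funext i a
      simpa using hu i a
    · right
      have h2' : (2:ℕ) • ((2 ^ (r j - 1) • w) - x₀) = 0 := by
        rw [smul_sub, h2, hx₀2, sub_zero]
      refine ⟨?_, h2'⟩
      have hall : ∀ i a, ∃ u, ((2 ^ (r j - 1) • w) - x₀) i a = 2 ^ (r j) • u := by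
        intro i a
        by_cases hij : i = j
        · subst hij
          have ha : a = a₀ := hFinj a
          rcases hcomp i a with ⟨u, hu⟩ | ⟨-, hval⟩
          · exfalso
            apply hy0
            rw [ha] at hu
            rw [hu, nsmul_eq_mul, ZMod.natCast_self, zero_mul]
          · refine ⟨0, ?_⟩
            have hx₀v : x₀ i a = c := by rw [hx₀_def, Pi.single_eq_same]
            rw [smul_zero, Pi.sub_apply, Pi.sub_apply, hval, hx₀v, hc_def, sub_self]
        · rcases hcomp i a with ⟨u, hu⟩ | ⟨hts, -⟩
          · refine ⟨u, ?_⟩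
            simpa [hx₀_def, Pi.single_eq_of_ne hij] using hu
          · exact absurd (hdist hts) hij
      choose u hu using hall
      exact ⟨fun i a => u i a, by funext i a; simpa using hu i a⟩
  exact key_abstract h hbij.1 H K hKH (fun v hv => hpres h _ v hv)
    (fun v hv => hpres h _ v hv) (fun v hv => hpres h.symm _ v hv) x₀ hx₀H hx₀K hdich
end

section
/- Let G = G₁ ⊕ (⊕_{i=1}^n (ℤ/2^{r_i}ℤ)^{m_i}) be a finite abelian group, where G₁ has odd order and the exponents r_i ≥ 1 are pairwise distinct. Then G admits a structure of (t−1)-invertible Λ-module (equivalently, there exists an automorphism h of G such that h − id is also an automorphism of G) if and only if m_i ≥ 2 for all i. -/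
lemma zmod_two_torsion {s : ℕ} (hs : 1 ≤ s) (a : ZMod (2^s)) (ha : a + a = 0) :
    ∃ u : ZMod (2^s), a = 2^(s-1) * u := by
  haveI : NeZero (2^s) := ⟨pow_ne_zero _ two_ne_zero⟩
  have hv : ((2 * a.val : ℕ) : ZMod (2^s)) = 0 := by
    push_cast [ZMod.natCast_zmod_val]
    rw [two_mul]; exact ha
  have hdvd : 2^s ∣ 2 * a.val := (ZMod.natCast_eq_zero_iff _ _).mp hv
  have h2 : 2^(s-1) ∣ a.val := by
    have h3 : 2 * 2^(s-1) ∣ 2 * a.val := by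
      rw [← pow_succ']
      have hss : s - 1 + 1 = s := by omega
      rw [hss]; exact hdvd
    exact (mul_dvd_mul_iff_left (two_ne_zero)).mp h3
  obtain ⟨k, hk⟩ := h2
  refine ⟨(k : ZMod (2^s)), ?_⟩
  have : a = ((a.val : ℕ) : ZMod (2^s)) := (ZMod.natCast_zmod_val a).symm
  rw [this, hk]
  push_cast
  ring

lemma zmod_pow_smul_cases {s : ℕ} (hs : 1 ≤ s) (a u : ZMod (2^s)) (h : a = 2^(s-1) * u) :
    a = 0 ∨ a = 2^(s-1) := by
  haveI : NeZero (2^s) := ⟨pow_ne_zero _ two_ne_zero⟩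
  have hu : u = ((u.val : ℕ) : ZMod (2^s)) := (ZMod.natCast_zmod_val u).symm
  have hself : ((2^s : ℕ) : ZMod (2^s)) = 0 := ZMod.natCast_self _
  rcases Nat.even_or_odd u.val with ⟨k, hk⟩ | ⟨k, hk⟩
  · left
    rw [h, hu, hk]
    push_cast
    have hpow : (2:ZMod (2^s))^(s-1) * 2 = 2^s := by
      rw [← pow_succ]; congr 1; omega
    have : (2:ZMod (2^s))^(s-1) * ((k:ZMod (2^s)) + k) = (2:ZMod (2^s))^s * k := by
      rw [← hpow]; ring
    rw [this]
    have h2 : ((2:ZMod (2^s)))^s = 0 := by push_cast at hself; exact hself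
    rw [h2, zero_mul]
  · right
    rw [h, hu, hk]
    push_cast
    have h2 : ((2:ZMod (2^s)))^s = 0 := by push_cast at hself; exact hself
    have hpow : (2:ZMod (2^s))^(s-1) * 2 = 2^s := by
      rw [← pow_succ]; congr 1; omega
    have : (2:ZMod (2^s))^(s-1) * (2 * (k:ZMod (2^s)) + 1) = (2:ZMod (2^s))^s * k + 2^(s-1) := by
      rw [← hpow]; ring
    rw [this, h2, zero_mul, zero_add]

lemma zmod_pow_pred_ne_zero {s : ℕ} (hs : 1 ≤ s) : ((2:ZMod (2^s))^(s-1)) ≠ 0 := by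
  haveI : NeZero (2^s) := ⟨pow_ne_zero _ two_ne_zero⟩
  intro h
  have : ((2^(s-1) : ℕ) : ZMod (2^s)) = 0 := by push_cast; exact h
  have hdvd : 2^s ∣ 2^(s-1) := (ZMod.natCast_eq_zero_iff _ _).mp this
  have := Nat.le_of_dvd (by positivity) hdvd
  have h1 : (2:ℕ)^(s-1) < 2^s := Nat.pow_lt_pow_right (by norm_num) (by omega)
  omega

lemma odd_card_nsmul_bijective {A : Type*} [AddCommGroup A] [Finite A]
    (h : Odd (Nat.card A)) (k : ℕ) : Function.Bijective (fun g : A => 2^k • g) := by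
  rw [← Finite.injective_iff_bijective]
  intro a b hab
  have hz : 2^k • (a - b) = 0 := by rw [smul_sub]; simpa [sub_eq_zero] using hab
  have h1 : addOrderOf (a - b) ∣ 2^k := addOrderOf_dvd_of_nsmul_eq_zero hz
  have h2 : addOrderOf (a - b) ∣ Nat.card A := addOrderOf_dvd_natCard _
  have hcop : Nat.Coprime (2^k) (Nat.card A) := by
    apply Nat.Coprime.pow_left
    rw [Nat.Prime.coprime_iff_not_dvd Nat.prime_two]
    rw [Nat.two_dvd_ne_zero, ← Nat.odd_iff]
    exact h
  have : addOrderOf (a - b) ∣ 1 := by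
    have := Nat.dvd_gcd h1 h2
    rwa [Nat.Coprime.gcd_eq_one hcop] at this
  have h4 : addOrderOf (a - b) = 1 := Nat.dvd_one.mp this
  exact sub_eq_zero.mp (AddMonoid.addOrderOf_eq_one_iff.mp h4)

def Dset (A : Type*) [AddCommGroup A] (ρ : ℕ) : Set A := {x | x + x = 0 ∧ ∃ y, x = ρ • y}

lemma Dset.map {A B : Type*} [AddCommGroup A] [AddCommGroup B] (f : A →+ B) {ρ : ℕ} {x : A}
    (hx : x ∈ Dset A ρ) : f x ∈ Dset B ρ := by
  obtain ⟨h1, y, hy⟩ := hx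
  exact ⟨by rw [← map_add, h1, map_zero], f y, by rw [hy, map_nsmul]⟩

lemma Dset.sub_mem {A : Type*} [AddCommGroup A] {ρ : ℕ} {x y : A}
    (hx : x ∈ Dset A ρ) (hy : y ∈ Dset A ρ) : x - y ∈ Dset A ρ := by
  obtain ⟨h1, z, hz⟩ := hx
  obtain ⟨h2, w, hw⟩ := hy
  refine ⟨?_, z - w, by rw [hz, hw, smul_sub]⟩
  have : (x - y) + (x - y) = (x + x) - (y + y) := by abel
  rw [this, h1, h2, sub_zero]

lemma Dset.mono {A : Type*} [AddCommGroup A] {ρ σ : ℕ} (h : ρ ∣ σ) :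
    Dset A σ ⊆ Dset A ρ := by
  rintro x ⟨h1, y, hy⟩
  obtain ⟨c, hc⟩ := h
  exact ⟨h1, c • y, by rw [hy, hc, mul_smul]⟩

lemma zmod_two_pow_self_zero (s : ℕ) : ((2:ZMod (2^s)))^s = 0 := by
  have := ZMod.natCast_self (2^s)
  push_cast at this
  exact this

lemma zmod_pow_pred_self_add {s : ℕ} (hs : 1 ≤ s) :
    (2:ZMod (2^s))^(s-1) + 2^(s-1) = 0 := by
  have hpow : (2:ZMod (2^s))^(s-1) * 2 = 2^s := by
    rw [← pow_succ]; congr 1; omega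
  have h2 : (2:ZMod (2^s))^(s-1) + 2^(s-1) = 2^(s-1) * 2 := by ring
  rw [h2, hpow, zmod_two_pow_self_zero]

/-- Let `G = G₁ ⊕ (⊕_{i=1}^n (ℤ/2^{r_i}ℤ)^{m_i})` be a finite abelian group with `G₁` of odd
order and the `r_i ≥ 1` pairwise distinct. Then `G` admits an automorphism `h` such that
`h − id` is also an automorphism (i.e. a structure of `(t−1)`-invertible `ℤ[t,t⁻¹]`-module)
if and only if `m_i ≥ 2` for all `i`. -/
theorem t_sub_one_invertible_structure_iff
    (G₁ : Type) [AddCommGroup G₁] [Finite G₁] (hodd : Odd (Nat.card G₁))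
    (n : ℕ) (r m : Fin n → ℕ)
    (hr : ∀ i, 1 ≤ r i) (hm : ∀ i, 1 ≤ m i)
    (hdist : Function.Injective r) :
    (∃ h : (G₁ × ∀ i : Fin n, Fin (m i) → ZMod (2 ^ r i)) ≃+
           (G₁ × ∀ i : Fin n, Fin (m i) → ZMod (2 ^ r i)),
        Function.Bijective (fun v => h v - v)) ↔
      ∀ i, 2 ≤ m i := by
  haveI : ∀ i, NeZero (2 ^ r i) := fun i => ⟨pow_ne_zero _ two_ne_zero⟩
  haveI : Finite (G₁ × ∀ i : Fin n, Fin (m i) → ZMod (2 ^ r i)) := by infer_instance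
  set G := G₁ × ∀ i : Fin n, Fin (m i) → ZMod (2 ^ r i) with hGdef
  constructor
  · rintro ⟨h, hbij⟩ i₀
    by_contra hlt
    have hm1 : m i₀ = 1 := by have := hm i₀; omega
    set R := r i₀ with hRdef
    set S : Set G := Dset G (2 ^ (R - 1)) with hSdef
    set T : Set G := Dset G (2 ^ R) with hTdef
    have TsubS : T ⊆ S := Dset.mono (pow_dvd_pow 2 (by omega))
    -- key characterization: an element of S whose i₀-component vanishes lies in T
    have claimC3 : ∀ x ∈ S, (∀ j, x.2 i₀ j = 0) → x ∈ T := by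
      rintro x ⟨hx2, y, hxy⟩ hx0
      have hc : ∀ i j, ∃ c : ZMod (2 ^ r i), x.2 i j = 2 ^ R • c := by
        intro i j
        rcases lt_trichotomy (r i) R with hlt' | heq | hgt
        · refine ⟨0, ?_⟩
          have hxij : x.2 i j = 2 ^ (R - 1) • y.2 i j := by rw [hxy]; rfl
          rw [hxij, nsmul_eq_mul]
          have hcast : ((2 ^ (R - 1) : ℕ) : ZMod (2 ^ r i)) = 0 := by
            rw [ZMod.natCast_eq_zero_iff]
            exact pow_dvd_pow 2 (by omega)
          rw [hcast, zero_mul, smul_zero]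
        · have hi : i = i₀ := hdist heq
          subst hi
          exact ⟨0, by rw [hx0 j, smul_zero]⟩
        · have h2t : x.2 i j + x.2 i j = 0 := by
            have := congrArg (fun z : G => z.2 i j) hx2
            exact this
          obtain ⟨u, hu⟩ := zmod_two_torsion (hr i) (x.2 i j) h2t
          refine ⟨2 ^ (r i - 1 - R) * u, ?_⟩
          rw [hu, nsmul_eq_mul]
          push_cast
          rw [← mul_assoc, ← pow_add]
          congr 2
          omega
      choose w hw using hc
      obtain ⟨g1, hg1⟩ := (odd_card_nsmul_bijective hodd R).surjective x.1
      refine ⟨hx2, (g1, fun i j => w i j), ?_⟩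
      refine Prod.ext hg1.symm ?_
      funext i j
      exact hw i j
    -- elements of S have i₀-component 0 or 2^(R-1)
    have claimC4 : ∀ x ∈ S, ∀ j, x.2 i₀ j = 0 ∨ x.2 i₀ j = (2:ZMod (2 ^ R)) ^ (R - 1) := by
      rintro x ⟨hx2, y, hxy⟩ j
      have hxij : x.2 i₀ j = 2 ^ (R - 1) • y.2 i₀ j := by rw [hxy]; rfl
      rw [nsmul_eq_mul] at hxij
      push_cast at hxij
      exact zmod_pow_smul_cases (hr i₀) _ _ hxij
    -- the witness element e ∈ S \ T
    obtain ⟨e, heS, heT⟩ : ∃ e : G, e ∈ S ∧ e ∉ T := by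
      refine ⟨(0, fun i j => if i = i₀ then (2:ZMod (2 ^ r i)) ^ (R - 1) else 0), ⟨?_, ?_⟩, ?_⟩
      · refine Prod.ext (by show (0:G₁) + 0 = 0; simp) ?_
        funext i j
        show (if i = i₀ then (2:ZMod (2 ^ r i)) ^ (R - 1) else 0) +
             (if i = i₀ then (2:ZMod (2 ^ r i)) ^ (R - 1) else 0) = 0
        split_ifs with hii
        · subst hii
          exact zmod_pow_pred_self_add (hr i)
        · simp
      · refine ⟨(0, fun i j => if i = i₀ then 1 else 0), ?_⟩
        refine Prod.ext (by show (0:G₁) = 2 ^ (R-1) • 0; simp) ?_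
        funext i j
        show (if i = i₀ then (2:ZMod (2 ^ r i)) ^ (R - 1) else 0) =
             2 ^ (R - 1) • (if i = i₀ then (1:ZMod (2 ^ r i)) else 0)
        split_ifs with hii
        · rw [nsmul_eq_mul, mul_one]; push_cast; rfl
        · simp
      · rintro ⟨-, y, hy⟩
        have hj0 : (0:ℕ) < m i₀ := by omega
        have hcontra := congrArg (fun z : G => z.2 i₀ ⟨0, hj0⟩) hy
        dsimp only at hcontra
        rw [if_pos rfl] at hcontra
        have hsm : (2 ^ R • y).2 i₀ ⟨0, hj0⟩ = 2 ^ R • (y.2 i₀ ⟨0, hj0⟩) := rfl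
        rw [hsm, nsmul_eq_mul] at hcontra
        have hz : ((2 ^ R : ℕ) : ZMod (2 ^ r i₀)) = 0 := by
          rw [hRdef]; exact ZMod.natCast_self _
        rw [hz, zero_mul] at hcontra
        exact zmod_pow_pred_ne_zero (hr i₀) hcontra
    -- h - id maps S into T
    have hstep : ∀ x ∈ S, h x - x ∈ T := by
      intro x hxS
      by_cases hxT : x ∈ T
      · have h1 : h x ∈ T := Dset.map h.toAddMonoidHom hxT
        exact Dset.sub_mem h1 hxT
      · have hhxS : h x ∈ S := Dset.map h.toAddMonoidHom hxS
        have hhxT : h x ∉ T := by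
          intro hc
          apply hxT
          have hmap := Dset.map h.symm.toAddMonoidHom hc
          simpa using hmap
        have hjall : ∀ j j' : Fin (m i₀), j = j' := by
          intro j j'
          apply Fin.ext
          have hj := j.isLt
          have hj' := j'.isLt
          omega
        have hx1 : ∀ j, x.2 i₀ j = (2:ZMod (2 ^ R)) ^ (R - 1) := by
          intro j
          rcases claimC4 x hxS j with h0 | h1
          · exact absurd (claimC3 x hxS fun j' => (hjall j' j) ▸ h0) hxT
          · exact h1
        have hhx1 : ∀ j, (h x).2 i₀ j = (2:ZMod (2 ^ R)) ^ (R - 1) := by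
          intro j
          rcases claimC4 (h x) hhxS j with h0 | h1
          · exact absurd (claimC3 (h x) hhxS fun j' => (hjall j' j) ▸ h0) hhxT
          · exact h1
        apply claimC3 (h x - x) (Dset.sub_mem hhxS hxS)
        intro j
        show (h x).2 i₀ j - x.2 i₀ j = 0
        rw [hx1 j, hhx1 j, sub_self]
    -- cardinality contradiction
    have himg : (fun v : G => h v - v) '' S ⊆ T := by
      rintro - ⟨x, hx, rfl⟩
      exact hstep x hx
    have h1 : ((fun v : G => h v - v) '' S).ncard = S.ncard :=
      Set.ncard_image_of_injective _ hbij.1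
    have h3 : T ⊂ S := ⟨TsubS, fun hc => heT (hc heS)⟩
    have h4 := Set.ncard_le_ncard himg (Set.toFinite T)
    have h5 := Set.ncard_lt_ncard h3 (Set.toFinite S)
    omega
  · intro hm2
    have h0m : ∀ i, 0 < m i := fun i => by have := hm2 i; omega
    have h1m : ∀ i, 1 < m i := fun i => by have := hm2 i; omega
    -- the companion-type automorphism on each 2-primary block
    set φ₂ : (∀ i : Fin n, Fin (m i) → ZMod (2 ^ r i)) →+
             (∀ i : Fin n, Fin (m i) → ZMod (2 ^ r i)) := AddMonoidHom.mk'
      (fun v i j => if hj : (j:ℕ) + 1 < m i then v i ⟨(j:ℕ) + 1, hj⟩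
        else v i ⟨0, h0m i⟩ + v i ⟨1, h1m i⟩)
      (by
        intro a b
        funext i j
        simp only [Pi.add_apply]
        split_ifs with hc
        · rfl
        · show (a + b) i _ + (a + b) i _ = _
          simp only [Pi.add_apply]
          abel) with hφ₂def
    set φ : G →+ G := (AddMonoidHom.id G₁ + AddMonoidHom.id G₁).prodMap φ₂ with hφdef
    have hφ1 : ∀ x : G, (φ x).1 = x.1 + x.1 := fun x => rfl
    have hφ2 : ∀ (x : G) i (j : Fin (m i)),
        (φ x).2 i j = if hj : (j:ℕ) + 1 < m i then x.2 i ⟨(j:ℕ) + 1, hj⟩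
          else x.2 i ⟨0, h0m i⟩ + x.2 i ⟨1, h1m i⟩ := fun x i j => rfl
    -- injectivity of φ
    have hφinj : Function.Injective φ := by
      rw [injective_iff_map_eq_zero]
      intro x hx
      have h1 : x.1 + x.1 = 0 := by rw [← hφ1 x, hx]; rfl
      have hx1 : x.1 = 0 := by
        apply (odd_card_nsmul_bijective hodd 1).injective
        show 2 ^ 1 • x.1 = 2 ^ 1 • 0
        rw [smul_zero, pow_one, two_nsmul, h1]
      have h2 : ∀ i (j : Fin (m i)), (φ x).2 i j = 0 := by
        intro i j; rw [hx]; rfl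
      have key : ∀ i (k : ℕ) (hk : k < m i), 0 < k → x.2 i ⟨k, hk⟩ = 0 := by
        intro i k hk hk0
        have hkm : k - 1 < m i := by omega
        have hcond : ((⟨k - 1, hkm⟩ : Fin (m i)) : ℕ) + 1 < m i := by
          show k - 1 + 1 < m i; omega
        have hval := h2 i ⟨k - 1, hkm⟩
        rw [hφ2, dif_pos hcond] at hval
        have heq : (⟨((⟨k - 1, hkm⟩ : Fin (m i)) : ℕ) + 1, hcond⟩ : Fin (m i)) = ⟨k, hk⟩ := by
          apply Fin.ext; show k - 1 + 1 = k; omega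
        rw [heq] at hval
        exact hval
      have key0 : ∀ i, x.2 i ⟨0, h0m i⟩ = 0 := by
        intro i
        have hmm : m i - 1 < m i := by have := h0m i; omega
        have hcond : ¬ (((⟨m i - 1, hmm⟩ : Fin (m i)) : ℕ) + 1 < m i) := by
          show ¬ (m i - 1 + 1 < m i); omega
        have hval := h2 i ⟨m i - 1, hmm⟩
        rw [hφ2, dif_neg hcond] at hval
        rw [key i 1 (h1m i) one_pos] at hval
        rw [add_zero] at hval
        exact hval
      refine Prod.ext hx1 ?_
      funext i j
      show x.2 i j = 0
      rcases Nat.eq_zero_or_pos (j : ℕ) with hj | hj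
      · have hje : j = ⟨0, h0m i⟩ := by apply Fin.ext; exact hj
        rw [hje]; exact key0 i
      · have hje : j = ⟨(j:ℕ), j.isLt⟩ := by apply Fin.ext; rfl
        rw [hje]; exact key i (j:ℕ) j.isLt hj
    -- injectivity of φ - id
    have hψinj : Function.Injective (fun v : G => φ v - v) := by
      have hfix : ∀ x : G, φ x = x → x = 0 := by
        intro x hfx
        have h1 : x.1 + x.1 = x.1 := by rw [← hφ1 x, hfx]
        have hx1 : x.1 = 0 := by
          have := add_eq_left.mp h1
          exact this
        have h2 : ∀ i (j : Fin (m i)),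
            (if hj : (j:ℕ) + 1 < m i then x.2 i ⟨(j:ℕ) + 1, hj⟩
              else x.2 i ⟨0, h0m i⟩ + x.2 i ⟨1, h1m i⟩) = x.2 i j := by
          intro i j
          rw [← hφ2, hfx]
        have key : ∀ i (k : ℕ) (hk : k < m i), x.2 i ⟨k, hk⟩ = x.2 i ⟨0, h0m i⟩ := by
          intro i k
          induction k with
          | zero => intro hk; rfl
          | succ k ih =>
            intro hk
            have hkm : k < m i := by omega
            have hcond : ((⟨k, hkm⟩ : Fin (m i)) : ℕ) + 1 < m i := by
              show k + 1 < m i; exact hk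
            have hval := h2 i ⟨k, hkm⟩
            rw [dif_pos hcond] at hval
            have heq : (⟨((⟨k, hkm⟩ : Fin (m i)) : ℕ) + 1, hcond⟩ : Fin (m i))
                = ⟨k + 1, hk⟩ := rfl
            rw [heq] at hval
            rw [ih hkm] at hval
            exact hval
        have key0 : ∀ i, x.2 i ⟨0, h0m i⟩ = 0 := by
          intro i
          have hmm : m i - 1 < m i := by have := h0m i; omega
          have hcond : ¬ (((⟨m i - 1, hmm⟩ : Fin (m i)) : ℕ) + 1 < m i) := by
            show ¬ (m i - 1 + 1 < m i); omega
          have hval := h2 i ⟨m i - 1, hmm⟩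
          rw [dif_neg hcond] at hval
          rw [key i 1 (h1m i), key i (m i - 1) hmm] at hval
          have h3 := add_eq_left.mp hval
          exact h3
        refine Prod.ext hx1 ?_
        funext i j
        show x.2 i j = 0
        have hje : j = ⟨(j:ℕ), j.isLt⟩ := by apply Fin.ext; rfl
        rw [hje, key i (j:ℕ) j.isLt]
        exact key0 i
      intro a b hab
      dsimp only at hab
      have hsub : φ (a - b) = a - b := by
        rw [map_sub]
        exact sub_eq_sub_iff_sub_eq_sub.mp hab
      exact sub_eq_zero.mp (hfix (a - b) hsub)
    -- conclude
    have hφbij : Function.Bijective φ := Finite.injective_iff_bijective.mp hφinj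
    refine ⟨AddEquiv.ofBijective φ hφbij, ?_⟩
    have hco : (fun v : G => (AddEquiv.ofBijective φ hφbij) v - v) = fun v : G => φ v - v := rfl
    rw [hco]
    exact Finite.injective_iff_bijective.mp hψinj
end

section
/- Let M be a Noetherian (t−1)-invertible Λ-module with t² − 1 ∈ Ann(M). Then M is a finite abelian group of odd order. -/
open Polynomial

/-!
Since `t - 1` is injective and `(t - 1)(t + 1)` kills `M`, `t` acts as `-1`, so `Λ` acts through
evaluation at `t = -1` and `M` is a finitely generated abelian group on which `t - 1` acts as `-2`.
As multiplication by `2` is onto, Nakayama's lemma gives an odd `r` with `r • M = 0`, so `M` is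
finite; as it is injective, `M` has no element of order `2`, so `|M|` is odd by Cauchy's theorem.
-/

open LaurentPolynomial

theorem Module.Finite.of_forall_exists_smul_eq {R S M : Type*} [Semiring R] [Semiring S]
    [AddCommMonoid M] [Module R M] [Module S M] [Module.Finite R M]
    (h : ∀ (r : R) (v : M), ∃ s : S, r • v = s • v) : Module.Finite S M := by
  obtain ⟨s, hs⟩ := Module.Finite.fg_top (R := R) (M := M)
  let N : Submodule R M :=
    { toAddSubmonoid := (Submodule.span S (s : Set M)).toAddSubmonoid
      smul_mem' := fun r v hv => by
        obtain ⟨a, ha⟩ := h r v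
        exact ha ▸ Submodule.smul_mem _ a hv }
  have hN : Submodule.span R (s : Set M) ≤ N := Submodule.span_le.mpr Submodule.subset_span
  exact ⟨s, eq_top_iff.mpr fun v _ => hN (hs ▸ Submodule.mem_top)⟩

theorem finite_of_fg_of_zsmul_surjective {M : Type*} [AddCommGroup M] [Module.Finite ℤ M] {n : ℤ}
    (hn : ¬IsUnit n) (h : Function.Surjective fun v : M => n • v) : Finite M := by
  have hle : (⊤ : Submodule ℤ M) ≤ Ideal.span {n} • ⊤ := fun v _ => by
    obtain ⟨w, rfl⟩ := h v
    exact Submodule.smul_mem_smul (Ideal.mem_span_singleton_self n) trivial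
  obtain ⟨r, hr, hrM⟩ := Submodule.exists_sub_one_mem_and_smul_eq_zero_of_fg_of_le_smul
    (Ideal.span {n}) ⊤ Module.Finite.fg_top hle
  obtain ⟨k, hk⟩ := Ideal.mem_span_singleton.mp hr
  have hr0 : r ≠ 0 := by
    rintro rfl
    exact hn (IsUnit.of_mul_eq_one (-k) (by linarith))
  exact Module.finite_of_fg_torsion M fun v =>
    ⟨⟨r, mem_nonZeroDivisors_of_ne_zero hr0⟩, hrM v trivial⟩

theorem Nat.Prime.not_dvd_card_of_nsmul_eq_zero {G : Type*} [AddGroup G] [Finite G] {p : ℕ}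
    (hp : p.Prime) (h : ∀ g : G, p • g = 0 → g = 0) : ¬p ∣ Nat.card G := by
  have := Fact.mk hp
  intro hdvd
  obtain ⟨g, hg⟩ := exists_prime_addOrderOf_dvd_card' p hdvd
  have hg0 : g = 0 := h g (hg ▸ addOrderOf_nsmul_eq_zero g)
  rw [hg0, addOrderOf_zero] at hg
  exact hp.one_lt.ne hg

noncomputable def evalNegOne : Λ →+* ℤ := eval₂ (RingHom.id ℤ) (-1)

section

variable {M : Type*} [AddCommGroup M] [Module Λ M]

theorem tL_smul_eq_neg (hinj : Function.Injective fun v : M => (tL - 1) • v)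
    (hann : ∀ v : M, (tL ^ 2 - 1) • v = 0) (v : M) : tL • v = -v := by
  have h : (tL - 1) • ((tL + 1) • v) = (tL - 1) • (0 : M) := by
    rw [smul_zero, ← mul_smul, ← hann v]; congr 1; ring
  have := hinj h
  rwa [add_smul, one_smul, add_eq_zero_iff_eq_neg] at this

theorem smul_eq_evalNegOne_smul (ht : ∀ v : M, tL • v = -v) (f : Λ) (v : M) :
    f • v = evalNegOne f • v := by
  have : Module.toAddMonoidEnd Λ M = (Int.castRingHom _).comp evalNegOne := by
    apply IsLocalization.ringHom_ext (Submonoid.powers (X : ℤ[X]))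
    apply Polynomial.ringHom_ext
    · intro a; ext v; simp [evalNegOne]
    · ext v
      simp only [RingHom.comp_apply, algebraMap_eq_toLaurent, toLaurent_X]
      exact (ht v).trans (by simp [evalNegOne, -Int.cast_neg, -Int.cast_one])
  exact congr($this f v)

end

/-- A Noetherian (t−1)-invertible Λ-module annihilated by `t² − 1` is a finite abelian group
of odd order. -/
theorem unipotence_index_two_finite_odd (M : Type) [AddCommGroup M] [Module Λ M]
    [IsNoetherian Λ M]
    (hM : Function.Bijective (fun v : M => (tL - 1) • v))
    (hann : ∀ v : M, (tL ^ 2 - 1) • v = 0) :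
    Finite M ∧ Odd (Nat.card M) := by
  have ht := tL_smul_eq_neg hM.injective hann
  have hsub (v : M) : (tL - 1) • v = (-2 : ℤ) • v := by
    rw [smul_eq_evalNegOne_smul ht]
    simp [evalNegOne, tL]
  have : Module.Finite ℤ M :=
    .of_forall_exists_smul_eq fun f v => ⟨_, smul_eq_evalNegOne_smul ht f v⟩
  have hfin : Finite M := finite_of_fg_of_zsmul_surjective (n := -2)
    (by norm_num [Int.isUnit_iff]) (by simpa only [hsub] using hM.2)
  have hno2 (g : M) (hg : 2 • g = 0) : g = 0 := hM.1 <| by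
    dsimp only
    rw [hsub, hsub, smul_zero, neg_smul, neg_eq_zero, two_zsmul, ← two_nsmul, hg]
  exact ⟨hfin, Nat.odd_iff.mpr <| Nat.two_dvd_ne_zero.mp <|
    Nat.prime_two.not_dvd_card_of_nsmul_eq_zero hno2⟩
end

section
/- A cyclic group G of order n = p₁^{r₁} ⋯ p_m^{r_m}, where p₁,…,p_m are distinct primes, possesses a structure of (t−1)-invertible Λ-module satisfying t^k·v = v for all v ∈ G if and only if for each i = 1,…,m there exists an element a_i of the field ℤ/p_iℤ with a_i ≠ 1 and 1 + a_i + a_i² + ⋯ + a_i^{k−1} = 0. -/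
/-!
An additive automorphism of `ZMod N` is multiplication by a unit `u`, so the structures in
question are the `u : ZMod N` with `u ^ k = 1` and `u - 1` a unit. By the Chinese remainder
theorem this condition splits over the prime powers `p ^ n ∣ N`, and modulo `p ^ n` it is
equivalent to the same condition modulo `p`: if `b` lifts a root `a ≠ 1` of `X ^ k - 1` in
`ZMod p`, then `b ^ p ^ (n - 1)` is still `≡ a` modulo `p` (Fermat), and it is a `k`-th root of
unity modulo `p ^ n` because `p ∣ b ^ k - 1`. In the field `ZMod p`, finally, `a ≠ 1` is a root of
`X ^ k - 1` exactly when it is a root of `1 + X + ⋯ + X ^ (k - 1)`.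
-/

def HasFixedPointFreeRootOfUnity (R : Type*) [Ring R] (k : ℕ) : Prop :=
  ∃ u : R, u ^ k = 1 ∧ IsUnit (u - 1)

namespace HasFixedPointFreeRootOfUnity

variable {R S : Type*} [Ring R] [Ring S] {k : ℕ}

theorem map (f : R →+* S) : HasFixedPointFreeRootOfUnity R k → HasFixedPointFreeRootOfUnity S k
  | ⟨u, hu, hunit⟩ => ⟨f u, by rw [← map_pow, hu, map_one], by simpa using hunit.map f⟩

theorem congr (e : R ≃+* S) :
    HasFixedPointFreeRootOfUnity R k ↔ HasFixedPointFreeRootOfUnity S k :=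
  ⟨map e.toRingHom, map e.symm.toRingHom⟩

theorem of_subsingleton [Subsingleton R] : HasFixedPointFreeRootOfUnity R k :=
  ⟨0, Subsingleton.elim _ _, isUnit_of_subsingleton _⟩

theorem prod_iff :
    HasFixedPointFreeRootOfUnity (R × S) k ↔
      HasFixedPointFreeRootOfUnity R k ∧ HasFixedPointFreeRootOfUnity S k := by
  constructor
  · intro h
    exact ⟨h.map (RingHom.fst R S), h.map (RingHom.snd R S)⟩
  · rintro ⟨⟨u, hu, hu1⟩, ⟨v, hv, hv1⟩⟩
    exact ⟨(u, v), by simp [Prod.ext_iff, hu, hv], Prod.isUnit_iff.mpr ⟨hu1, hv1⟩⟩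

theorem iff_exists_geom_sum_eq_zero {K : Type*} [Field K] :
    HasFixedPointFreeRootOfUnity K k ↔ ∃ a : K, a ≠ 1 ∧ ∑ j ∈ Finset.range k, a ^ j = 0 := by
  refine exists_congr fun a => ?_
  rw [isUnit_iff_ne_zero, sub_ne_zero, and_comm]
  refine and_congr_right fun ha => ?_
  rw [geom_sum_eq ha, div_eq_zero_iff, sub_eq_zero, or_iff_left (sub_ne_zero.mpr ha)]

end HasFixedPointFreeRootOfUnity

theorem ZMod.addMonoidHom_apply_eq_mul {N : ℕ} {F : Type*} [FunLike F (ZMod N) (ZMod N)]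
    [AddMonoidHomClass F (ZMod N) (ZMod N)] (f : F) (v : ZMod N) : f v = f 1 * v := by
  simpa [mul_comm] using ZMod.map_smul f v 1

theorem ZMod.exists_addEquiv_iff {N k : ℕ} (hk : 0 < k) :
    (∃ h : ZMod N ≃+ ZMod N,
        Function.Bijective (fun v => h v - v) ∧ ∀ v, (⇑h)^[k] v = v) ↔
      HasFixedPointFreeRootOfUnity (ZMod N) k := by
  constructor
  · rintro ⟨h, hbij, hfix⟩
    obtain ⟨u, hmul⟩ : ∃ u, ⇑h = (u * ·) := ⟨h 1, funext (ZMod.addMonoidHom_apply_eq_mul h)⟩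
    refine ⟨u, ?_, ?_⟩
    · simpa [hmul] using hfix 1
    · rw [IsUnit.isUnit_iff_mulLeft_bijective]
      simpa [hmul, sub_mul] using hbij
  · rintro ⟨u, hu, hunit⟩
    let h := DistribMulAction.toAddEquiv (ZMod N) (IsUnit.of_pow_eq_one hu hk.ne').unit
    have hmul : ⇑h = (u * ·) := funext fun v => by simp [h, Units.smul_def]
    refine ⟨h, ?_, fun v => ?_⟩
    · simpa [hmul, sub_mul] using IsUnit.isUnit_iff_mulLeft_bijective.mp hunit
    · simp [hmul, hu]

namespace ZMod

variable {p n : ℕ} [Fact p.Prime]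

theorem isUnit_iff_castHom_ne_zero (hn : n ≠ 0) (x : ZMod (p ^ n)) :
    IsUnit x ↔ castHom (dvd_pow_self p hn) (ZMod p) x ≠ 0 := by
  have : NeZero (p ^ n) := ⟨pow_ne_zero n (Fact.out : p.Prime).ne_zero⟩
  conv_lhs => rw [← natCast_zmod_val x]
  rw [isUnit_iff_coprime, Nat.coprime_pow_right_iff (Nat.pos_of_ne_zero hn), Nat.coprime_comm,
    Nat.Prime.coprime_iff_not_dvd Fact.out, castHom_apply, cast_eq_val, ne_eq, natCast_eq_zero_iff]

theorem natCast_dvd_of_castHom_eq_zero (hn : n ≠ 0) {x : ZMod (p ^ n)}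
    (hx : castHom (dvd_pow_self p hn) (ZMod p) x = 0) : (p : ZMod (p ^ n)) ∣ x := by
  have : NeZero (p ^ n) := ⟨pow_ne_zero n (Fact.out : p.Prime).ne_zero⟩
  rw [castHom_apply, cast_eq_val, natCast_eq_zero_iff] at hx
  obtain ⟨c, hc⟩ := hx
  exact ⟨c, by rw [← natCast_zmod_val x, hc, Nat.cast_mul]⟩

end ZMod

namespace HasFixedPointFreeRootOfUnity

variable {k : ℕ}

theorem zmod_prime_pow_iff {p n : ℕ} [Fact p.Prime] (hn : n ≠ 0) :
    HasFixedPointFreeRootOfUnity (ZMod (p ^ n)) k ↔ HasFixedPointFreeRootOfUnity (ZMod p) k := by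
  set φ := ZMod.castHom (dvd_pow_self p hn) (ZMod p)
  refine ⟨map φ, ?_⟩
  rintro ⟨a, ha, ha1⟩
  obtain ⟨b, rfl⟩ := ZMod.ringHom_surjective φ a
  refine ⟨b ^ p ^ (n - 1), ?_, ?_⟩
  · have hdvd : (p : ZMod (p ^ n)) ∣ b ^ k - 1 :=
      ZMod.natCast_dvd_of_castHom_eq_zero hn (by rw [map_sub, map_pow, ha, map_one, sub_self])
    have := dvd_sub_pow_of_dvd_sub hdvd (n - 1)
    rwa [Nat.sub_add_cancel (Nat.pos_of_ne_zero hn), ← Nat.cast_pow, ZMod.natCast_self,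
      zero_dvd_iff, sub_eq_zero, one_pow, ← pow_mul, mul_comm, pow_mul] at this
  · rw [ZMod.isUnit_iff_castHom_ne_zero hn, map_sub, map_pow, ZMod.pow_card_pow, map_one]
    exact ha1.ne_zero

theorem zmod_iff {N : ℕ} (hN : N ≠ 0) :
    HasFixedPointFreeRootOfUnity (ZMod N) k ↔
      ∀ q, q.Prime → q ∣ N → HasFixedPointFreeRootOfUnity (ZMod q) k := by
  induction N using Nat.recOnPosPrimePosCoprime with
  | prime_pow p n hp hn =>
    have := Fact.mk hp
    rw [zmod_prime_pow_iff hn.ne']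
    refine ⟨fun h q hq hqp => ?_, fun h => h p hp (dvd_pow_self p hn.ne')⟩
    rwa [(Nat.prime_dvd_prime_iff_eq hq hp).mp (hq.dvd_of_dvd_pow hqp)]
  | zero => exact absurd rfl hN
  | one => exact iff_of_true of_subsingleton fun q hq h1 => absurd (Nat.dvd_one.mp h1) hq.ne_one
  | coprime a b ha hb hab iha ihb =>
    rw [congr (ZMod.chineseRemainder hab), prod_iff, iha (by omega), ihb (by omega)]
    constructor
    · rintro ⟨h1, h2⟩ q hq hdvd
      exact (hq.dvd_mul.mp hdvd).elim (h1 q hq) (h2 q hq)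
    · intro h
      exact ⟨fun q hq hd => h q hq (hd.mul_right b), fun q hq hd => h q hq (hd.mul_left a)⟩

end HasFixedPointFreeRootOfUnity

theorem Nat.Prime.dvd_prod_pow_iff {ι : Type*} {s : Finset ι} {p r : ι → ℕ}
    (hp : ∀ i, (p i).Prime) (hr : ∀ i, r i ≠ 0) {q : ℕ} (hq : q.Prime) :
    q ∣ ∏ i ∈ s, p i ^ r i ↔ ∃ i ∈ s, q = p i := by
  rw [hq.prime.dvd_finsetProd_iff]
  refine exists_congr fun i => and_congr_right fun _ => ⟨fun h => ?_, fun h => ?_⟩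
  · exact (Nat.prime_dvd_prime_iff_eq hq (hp i)).mp (hq.dvd_of_dvd_pow h)
  · exact h ▸ dvd_pow_self _ (hr i)

theorem cyclic_group_invertible_structure_iff_general
    (m k : ℕ) (hk : 1 ≤ k) (p r : Fin m → ℕ)
    (hp : ∀ i, (p i).Prime) (hr : ∀ i, 1 ≤ r i) :
    (∃ h : ZMod (∏ i, p i ^ r i) ≃+ ZMod (∏ i, p i ^ r i),
        Function.Bijective (fun v => h v - v) ∧ ∀ v, (⇑h)^[k] v = v) ↔
      ∀ i, ∃ a : ZMod (p i), a ≠ 1 ∧ ∑ j ∈ Finset.range k, a ^ j = 0 := by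
  have hr' : ∀ i, r i ≠ 0 := fun i => Nat.one_le_iff_ne_zero.mp (hr i)
  have hprod : ∏ i, p i ^ r i ≠ 0 :=
    Finset.prod_ne_zero_iff.mpr fun i _ => pow_ne_zero _ (hp i).ne_zero
  rw [ZMod.exists_addEquiv_iff hk, HasFixedPointFreeRootOfUnity.zmod_iff hprod]
  refine ⟨fun h i => ?_, fun h q hq hdvd => ?_⟩
  · have := Fact.mk (hp i)
    refine HasFixedPointFreeRootOfUnity.iff_exists_geom_sum_eq_zero.mp (h _ (hp i) ?_)
    exact ((hp i).dvd_prod_pow_iff hp hr').mpr ⟨i, Finset.mem_univ i, rfl⟩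
  · obtain ⟨i, -, rfl⟩ := (hq.dvd_prod_pow_iff hp hr').mp hdvd
    have := Fact.mk (hp i)
    exact HasFixedPointFreeRootOfUnity.iff_exists_geom_sum_eq_zero.mpr (h i)

/-- A cyclic group of order `n = p₁^{r₁} ⋯ p_m^{r_m}` (the `p_i` distinct primes) has a
structure of `(t−1)`-invertible `ℤ[t,t⁻¹]`-module with `t^k = id` — i.e. an automorphism `h`
with `h − id` an automorphism and `h^k = id` — iff for each `i` the polynomial
`1 + t + ⋯ + t^{k−1}` has a root `a_i ≠ 1` in `ℤ/p_iℤ`. -/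
theorem cyclic_group_invertible_structure_iff
    (m k : ℕ) (hk : 1 ≤ k) (p r : Fin m → ℕ)
    (hp : ∀ i, (p i).Prime) (hr : ∀ i, 1 ≤ r i)
    (hdist : Function.Injective p) :
    (∃ h : ZMod (∏ i, p i ^ r i) ≃+ ZMod (∏ i, p i ^ r i),
        Function.Bijective (fun v => h v - v) ∧ ∀ v, (⇑h)^[k] v = v) ↔
      ∀ i, ∃ a : ZMod (p i), a ≠ 1 ∧ ∑ j ∈ Finset.range k, a ^ j = 0 :=
  cyclic_group_invertible_structure_iff_general m k hk p r hp hr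
end

section
/- Every Noetherian (t−1)-invertible t-unipotent Λ-module is finitely generated as an abelian group (i.e., as a ℤ-module). -/
open Polynomial

/-!
Since `t ^ n` acts trivially, the action of `Λ` factors through `Λ ⧸ (t ^ n - 1)`. Modulo
`t ^ n - 1` every Laurent polynomial is congruent to a polynomial, so this quotient is an image of
`ℤ[X] ⧸ (X ^ n - 1)`, a finite `ℤ`-module as `X ^ n - 1` is monic. A Noetherian `Λ`-module is
finitely generated over `Λ`, hence over `Λ ⧸ (t ^ n - 1)`, hence over `ℤ`.
-/

theorem Module.Finite.of_isTorsionBySet_s15 {R A M : Type*} [CommRing R] [CommRing A] [Algebra R A]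
    [AddCommGroup M] [Module R M] [Module A M] [IsScalarTower R A M] [Module.Finite A M]
    {I : Ideal A} (hM : Module.IsTorsionBySet A M I) [Module.Finite R (A ⧸ I)] :
    Module.Finite R M := by
  let := hM.module
  have : Module.Finite (A ⧸ I) M := .of_restrictScalars_finite A (A ⧸ I) M
  exact .trans (A ⧸ I) M

namespace LaurentPolynomial

variable {R : Type*} [CommRing R] {n : ℕ}

theorem exists_sub_toLaurent_mem_span_T_sub_one (hn : n ≠ 0) (p : R[T;T⁻¹]) :
    ∃ f : R[X], p - toLaurent f ∈ Ideal.span {(T n - 1 : R[T;T⁻¹])} := by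
  induction p using induction_on_mul_T with
  | mul_T f m =>
    -- `T n ≡ 1`, so `T (-m) ≡ T ((n - 1) * m)`
    refine ⟨f * X ^ ((n - 1) * m), Ideal.mem_span_singleton.mpr ?_⟩
    have hT : (T (-m) : R[T;T⁻¹]) - toLaurent (X ^ ((n - 1) * m) : R[X]) =
        -T (-m) * (T n ^ m - 1) := by
      rw [Polynomial.toLaurent_X_pow, T_pow, mul_sub, neg_mul, ← T_add, Nat.cast_mul,
        Nat.cast_sub (Nat.one_le_iff_ne_zero.mpr hn)]
      ring_nf
    rw [map_mul, ← mul_sub, hT, ← mul_assoc]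
    exact Dvd.dvd.mul_left (by simpa using sub_dvd_pow_sub_pow (T n : R[T;T⁻¹]) 1 m) _

theorem finite_quotient_span_T_sub_one (hn : n ≠ 0) :
    Module.Finite R (R[T;T⁻¹] ⧸ Ideal.span {(T n - 1 : R[T;T⁻¹])}) := by
  have hle : Ideal.span {(X ^ n - Polynomial.C 1 : R[X])} ≤
      (Ideal.span {(T n - 1 : R[T;T⁻¹])}).comap (toLaurentAlg (R := R)) := by
    rw [Ideal.span_le, Set.singleton_subset_iff]
    exact Ideal.subset_span (by simp)
  have := (monic_X_pow_sub_C (1 : R) hn).finite_quotient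
  refine .of_surjective (Ideal.quotientMapₐ _ _ hle).toLinearMap ?_
  rintro ⟨p⟩
  obtain ⟨f, hf⟩ := exists_sub_toLaurent_mem_span_T_sub_one hn p
  exact ⟨Ideal.Quotient.mk _ f, (Ideal.Quotient.eq.mpr hf).symm⟩

end LaurentPolynomial

theorem tL_pow (n : ℕ) : tL ^ n = LaurentPolynomial.T n := by
  rw [tL, LaurentPolynomial.T_pow, mul_one]

theorem unipotent_invertible_finitely_generated_over_int_general (M : Type) [AddCommGroup M]
    [Module Λ M] [IsNoetherian Λ M]
    (huni : ∃ n : ℕ, 1 ≤ n ∧ ∀ v : M, (tL ^ n) • v = v) :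
    Module.Finite ℤ M := by
  obtain ⟨n, hn, htn⟩ := huni
  have htorsion : Module.IsTorsionBySet Λ M (Ideal.span {(LaurentPolynomial.T n - 1 : Λ)}) := by
    rw [Module.isTorsionBySet_span_singleton_iff, ← tL_pow]
    intro v
    rw [sub_smul, one_smul, htn, sub_self]
  have := LaurentPolynomial.finite_quotient_span_T_sub_one (R := ℤ) (n := n) (by omega)
  exact .of_isTorsionBySet htorsion

/-- Every Noetherian (t−1)-invertible t-unipotent Λ-module is finitely generated
as an abelian group. -/
theorem unipotent_invertible_finitely_generated_over_int (M : Type) [AddCommGroup M]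
    [Module Λ M] [IsNoetherian Λ M]
    (hM : Function.Bijective (fun v : M => (tL - 1) • v))
    (huni : ∃ n : ℕ, 1 ≤ n ∧ ∀ v : M, (tL ^ n) • v = v) :
    Module.Finite ℤ M :=
  unipotent_invertible_finitely_generated_over_int_general M huni
end
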